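/- arXiv:1907.06883 — 5 statements merged into one kernel-verified Lean document; each statement's English description precedes it below -/
import Mathlib

section
/- A real n×n matrix A is stable (all eigenvalues have nonpositive real part, and those on the imaginary axis are semisimple) if and only if A is a dissipative Hamiltonian (DH) matrix, i.e., A = (J - R)Q for some real n×n matrices with Jᵀ = -J, R positive semidefinite, and Q positive definite. -/
open Matrix

noncomputable section

/-- A real square matrix is *stable* if every eigenvalue (over ℂ) has nonpositive
real part, and eigenvalues on the imaginary axis are semisimple
(i.e. ker((A-μI)²) = ker(A-μI)). -/
def Matrix.IsStable {n : Type*} [Fintype n] [DecidableEq n] (A : Matrix n n ℝ) : Prop :=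
  ∀ μ : ℂ, (A.map Complex.ofReal - μ • (1 : Matrix n n ℂ)).det = 0 →
    μ.re ≤ 0 ∧ (μ.re = 0 →
      ∀ v : n → ℂ,
        ((A.map Complex.ofReal - μ • 1) * (A.map Complex.ofReal - μ • 1)).mulVec v = 0 →
        (A.map Complex.ofReal - μ • 1).mulVec v = 0)

/-- `Ad` is the Moore–Penrose pseudoinverse of the real matrix `A`. -/
def IsMoorePenrose {m n : Type*} [Fintype m] [Fintype n]
    (A : Matrix m n ℝ) (Ad : Matrix n m ℝ) : Prop :=
  A * Ad * A = A ∧ Ad * A * Ad = Ad ∧ (A * Ad).IsHermitian ∧ (Ad * A).IsHermitian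

namespace StableDH

open Complex Polynomial

variable {n : ℕ}

/-- complexification -/
def cplx (M : Matrix (Fin n) (Fin n) ℝ) : Matrix (Fin n) (Fin n) ℂ :=
  M.map Complex.ofReal

lemma cplx_mul (M N : Matrix (Fin n) (Fin n) ℝ) : cplx (M * N) = cplx M * cplx N :=
  Matrix.map_mul (f := Complex.ofRealHom)

lemma cplx_conjTranspose (M : Matrix (Fin n) (Fin n) ℝ) : (cplx M)ᴴ = cplx Mᵀ := by
  ext i j
  simp [cplx, conjTranspose_apply, Matrix.map_apply]

/-- shift a matrix across the `⟨star ·, ·⟩` pairing -/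
lemma ip_shift (M : Matrix (Fin n) (Fin n) ℂ) (x y : Fin n → ℂ) :
    star x ⬝ᵥ M *ᵥ y = star (Mᴴ *ᵥ x) ⬝ᵥ y := by
  rw [star_mulVec, conjTranspose_conjTranspose, ← dotProduct_mulVec]

lemma re_dot_cplx (M : Matrix (Fin n) (Fin n) ℝ) (v : Fin n → ℂ) :
    (star v ⬝ᵥ (cplx M) *ᵥ v).re
      = (fun i => (v i).re) ⬝ᵥ M *ᵥ (fun i => (v i).re)
        + (fun i => (v i).im) ⬝ᵥ M *ᵥ (fun i => (v i).im) := by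
  simp only [dotProduct, mulVec, dotProduct, Complex.re_sum, Finset.mul_sum,
    ← Finset.sum_add_distrib]
  refine Finset.sum_congr rfl fun i _ => Finset.sum_congr rfl fun j _ => ?_
  simp [cplx, Matrix.map_apply, Pi.star_apply, Complex.mul_re, Complex.mul_im]
  try ring

lemma im_dot_cplx_symm {M : Matrix (Fin n) (Fin n) ℝ} (hM : Mᵀ = M) (v : Fin n → ℂ) :
    (star v ⬝ᵥ (cplx M) *ᵥ v).im = 0 := by
  have key : ∀ x y : Fin n → ℝ, x ⬝ᵥ M *ᵥ y = y ⬝ᵥ M *ᵥ x := by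
    intro x y
    rw [dotProduct_mulVec, ← mulVec_transpose, hM, dotProduct_comm]
  have : (star v ⬝ᵥ (cplx M) *ᵥ v).im
      = (fun i => (v i).re) ⬝ᵥ M *ᵥ (fun i => (v i).im)
        - (fun i => (v i).im) ⬝ᵥ M *ᵥ (fun i => (v i).re) := by
    simp only [dotProduct, mulVec, dotProduct, Complex.im_sum, Finset.mul_sum,
      ← Finset.sum_sub_distrib]
    refine Finset.sum_congr rfl fun i _ => Finset.sum_congr rfl fun j _ => ?_
    simp [cplx, Matrix.map_apply, Pi.star_apply, Complex.mul_re, Complex.mul_im]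
    ring
  rw [this, key]
  ring

/-- skew quadratic form vanishes -/
lemma skew_quad {J : Matrix (Fin n) (Fin n) ℝ} (hJ : Jᵀ = -J) (x : Fin n → ℝ) :
    x ⬝ᵥ J *ᵥ x = 0 := by
  have h : x ⬝ᵥ J *ᵥ x = x ⬝ᵥ Jᵀ *ᵥ x := by
    calc x ⬝ᵥ J *ᵥ x = x ᵥ* J ⬝ᵥ x := by rw [dotProduct_mulVec]
      _ = x ⬝ᵥ Jᵀ *ᵥ x := by rw [← mulVec_transpose, dotProduct_comm]
  rw [hJ] at h
  simp only [neg_mulVec, dotProduct_neg] at h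
  linarith

section Bwd
variable {J R Q : Matrix (Fin n) (Fin n) ℝ}

lemma symm_of_herm {M : Matrix (Fin n) (Fin n) ℝ} (h : M.IsHermitian) : Mᵀ = M := h

lemma cplx_sub (M N : Matrix (Fin n) (Fin n) ℝ) : cplx (M - N) = cplx M - cplx N := by
  ext i j; simp [cplx, Matrix.map_apply]

lemma cplx_neg (M : Matrix (Fin n) (Fin n) ℝ) : cplx (-M) = -cplx M := by
  ext i j; simp [cplx, Matrix.map_apply]

lemma cplx_posdef_re (hQ : Q.PosDef) {v : Fin n → ℂ} (hv : v ≠ 0) :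
    0 < (star v ⬝ᵥ cplx Q *ᵥ v).re := by
  rw [re_dot_cplx]
  have hre : ∀ x : Fin n → ℝ, x ≠ 0 → 0 < x ⬝ᵥ Q *ᵥ x := by
    intro x hx
    simpa using hQ.dotProduct_mulVec_pos hx
  have hre' : ∀ x : Fin n → ℝ, 0 ≤ x ⬝ᵥ Q *ᵥ x := by
    intro x
    simpa using hQ.posSemidef.dotProduct_mulVec_nonneg x
  by_cases hx : (fun i => (v i).re) = (0 : Fin n → ℝ)
  · have hy : (fun i => (v i).im) ≠ (0 : Fin n → ℝ) := by
      intro hy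
      apply hv
      funext i
      have h1 : (v i).re = 0 := congrFun hx i
      have h2 : (v i).im = 0 := congrFun hy i
      exact Complex.ext h1 h2
    have := hre _ hy
    have := hre' (fun i => (v i).re)
    linarith
  · have := hre _ hx
    have := hre' (fun i => (v i).im)
    linarith

lemma cplx_psd_re (hR : R.PosSemidef) (v : Fin n → ℂ) :
    0 ≤ (star v ⬝ᵥ cplx R *ᵥ v).re := by
  rw [re_dot_cplx]
  have hre' : ∀ x : Fin n → ℝ, 0 ≤ x ⬝ᵥ R *ᵥ x := fun x => by simpa using hR.dotProduct_mulVec_nonneg x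
  have := hre' fun i => (v i).re
  have := hre' fun i => (v i).im
  linarith

lemma skew_re (hJ : Jᵀ = -J) (v : Fin n → ℂ) :
    (star v ⬝ᵥ cplx J *ᵥ v).re = 0 := by
  rw [re_dot_cplx, skew_quad hJ, skew_quad hJ, add_zero]

theorem backward (hJ : Jᵀ = -J) (hR : R.PosSemidef) (hQ : Q.PosDef)
    (A : Matrix (Fin n) (Fin n) ℝ) (hA : A = (J - R) * Q) : A.IsStable := by
  have hQsymm : Qᵀ = Q := symm_of_herm hQ.1
  have hQcH : (cplx Q)ᴴ = cplx Q := by rw [cplx_conjTranspose, hQsymm]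
  have hAc : (A.map Complex.ofReal) = cplx (J - R) * cplx Q := by
    rw [show A.map Complex.ofReal = cplx A from rfl, hA, cplx_mul]
  -- the key eigencomputation
  have eigRe : ∀ (μ : ℂ) (u : Fin n → ℂ), (A.map Complex.ofReal) *ᵥ u = μ • u →
      μ.re * (star u ⬝ᵥ cplx Q *ᵥ u).re
        = - (star (cplx Q *ᵥ u) ⬝ᵥ cplx R *ᵥ (cplx Q *ᵥ u)).re := by
    intro μ u hu
    set w := cplx Q *ᵥ u with hw
    have h1 : cplx (J - R) *ᵥ w = μ • u := by
      rw [hw, mulVec_mulVec, ← hAc, hu]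
    have hd : star w ⬝ᵥ u = star u ⬝ᵥ cplx Q *ᵥ u := by
      rw [ip_shift (cplx Q) u u, hQcH]
    have lhs_eq : star w ⬝ᵥ cplx (J - R) *ᵥ w = μ * (star u ⬝ᵥ cplx Q *ᵥ u) := by
      rw [h1, dotProduct_smul, ← hd]
      simp [smul_eq_mul]
      try ring
    have lhs_re : (star w ⬝ᵥ cplx (J - R) *ᵥ w).re
        = - (star w ⬝ᵥ cplx R *ᵥ w).re := by
      rw [cplx_sub, Matrix.sub_mulVec, dotProduct_sub, Complex.sub_re,
        skew_re hJ, zero_sub]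
    have him : (star u ⬝ᵥ cplx Q *ᵥ u).im = 0 := im_dot_cplx_symm hQsymm u
    have : (μ * (star u ⬝ᵥ cplx Q *ᵥ u)).re = μ.re * (star u ⬝ᵥ cplx Q *ᵥ u).re := by
      rw [Complex.mul_re, him]
      ring
    rw [← this, ← lhs_eq, lhs_re]
  intro μ hdet
  obtain ⟨v, hv0, hv⟩ := Matrix.exists_mulVec_eq_zero_iff.mpr hdet
  have hAv : (A.map Complex.ofReal) *ᵥ v = μ • v := by
    have := hv
    rw [Matrix.sub_mulVec, sub_eq_zero, Matrix.smul_mulVec, Matrix.one_mulVec] at this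
    exact this
  constructor
  · -- Re μ ≤ 0
    have h1 := eigRe μ v hAv
    have h2 : 0 < (star v ⬝ᵥ cplx Q *ᵥ v).re := cplx_posdef_re hQ hv0
    have h3 : 0 ≤ (star (cplx Q *ᵥ v) ⬝ᵥ cplx R *ᵥ (cplx Q *ᵥ v)).re := cplx_psd_re hR _
    nlinarith
  · -- semisimplicity
    intro hμre x hx
    set B := A.map Complex.ofReal - μ • (1 : Matrix (Fin n) (Fin n) ℂ) with hB
    set u := B *ᵥ x with hu
    by_cases hu0 : u = 0
    · exact hu0
    exfalso
    have hBu : B *ᵥ u = 0 := by rw [hu, mulVec_mulVec, hx]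
    have hAu : (A.map Complex.ofReal) *ᵥ u = μ • u := by
      have := hBu
      rw [hB, Matrix.sub_mulVec, sub_eq_zero, Matrix.smul_mulVec,
        Matrix.one_mulVec] at this
      exact this
    set wu := cplx Q *ᵥ u with hwu
    -- R annihilates wu
    have hRre : (star wu ⬝ᵥ cplx R *ᵥ wu).re = 0 := by
      have h1 := eigRe μ u hAu
      rw [hμre, zero_mul] at h1
      linarith [cplx_psd_re hR wu]
    have hRwu : cplx R *ᵥ wu = 0 := by
      have hre' : ∀ y : Fin n → ℝ, y ⬝ᵥ R *ᵥ y = 0 → R *ᵥ y = 0 := by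
        intro y hy
        have := (hR.dotProduct_mulVec_zero_iff y).mp (by simpa using hy)
        exact this
      rw [re_dot_cplx] at hRre
      have hnn1 : 0 ≤ (fun i => (wu i).re) ⬝ᵥ R *ᵥ (fun i => (wu i).re) := by
        simpa using hR.dotProduct_mulVec_nonneg (fun i => (wu i).re)
      have hnn2 : 0 ≤ (fun i => (wu i).im) ⬝ᵥ R *ᵥ (fun i => (wu i).im) := by
        simpa using hR.dotProduct_mulVec_nonneg (fun i => (wu i).im)
      have e1 : R *ᵥ (fun i => (wu i).re) = 0 := hre' _ (by linarith)
      have e2 : R *ᵥ (fun i => (wu i).im) = 0 := hre' _ (by linarith)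
      funext i
      have c1 : (cplx R *ᵥ wu) i
          = ((R *ᵥ fun j => (wu j).re) i : ℂ) + ((R *ᵥ fun j => (wu j).im) i : ℂ) * Complex.I := by
        apply Complex.ext <;>
          simp [mulVec, dotProduct, cplx, Matrix.map_apply, Complex.re_sum, Complex.im_sum,
            Complex.mul_re, Complex.mul_im]
      rw [c1, e1, e2]
      simp
    -- J sends wu to μ • u
    have hJR : cplx (J - R) *ᵥ wu = μ • u := by
      rw [hwu, mulVec_mulVec, ← hAc, hAu]
    have hJwu : cplx J *ᵥ wu = μ • u := by
      rw [cplx_sub, Matrix.sub_mulVec, hRwu, sub_zero] at hJR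
      exact hJR
    have hJRH : (cplx (J - R))ᴴ *ᵥ wu = -(μ • u) := by
      have ht : (J - R)ᵀ = -J - R := by
        rw [Matrix.transpose_sub, hJ, symm_of_herm hR.1]
      rw [cplx_conjTranspose, ht, cplx_sub, cplx_neg, Matrix.sub_mulVec,
        Matrix.neg_mulVec, hJwu, hRwu, sub_zero]
    -- the contradiction: ⟨u, u⟩_Q = 0
    have hux : u = (A.map Complex.ofReal) *ᵥ x - μ • x := by
      rw [hu, hB, Matrix.sub_mulVec, Matrix.smul_mulVec, Matrix.one_mulVec]
    have he : star u ⬝ᵥ cplx Q *ᵥ u = 0 := by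
      have hshift : star u ⬝ᵥ cplx Q *ᵥ u = star wu ⬝ᵥ u := by
        rw [ip_shift (cplx Q) u u, hQcH]
      have hshift2 : star wu ⬝ᵥ x = star u ⬝ᵥ cplx Q *ᵥ x := by
        rw [ip_shift (cplx Q) u x, hQcH]
      have hterm1 : star wu ⬝ᵥ ((A.map Complex.ofReal) *ᵥ x)
          = -((starRingEnd ℂ) μ * (star u ⬝ᵥ cplx Q *ᵥ x)) := by
        rw [hAc, ← mulVec_mulVec, ip_shift, hJRH]
        simp only [star_neg, star_smul, neg_dotProduct, smul_dotProduct]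
        simp [smul_eq_mul]
      rw [hshift, hux, dotProduct_sub, dotProduct_smul, hterm1, hshift2]
      have hc : (starRingEnd ℂ) μ + μ = (2 * μ.re : ℝ) := by
        rw [add_comm ((starRingEnd ℂ) μ) μ, Complex.add_conj]
        try push_cast
        try ring
      have : -((starRingEnd ℂ) μ * (star u ⬝ᵥ cplx Q *ᵥ x)) - μ • (star u ⬝ᵥ cplx Q *ᵥ x)
          = -(((starRingEnd ℂ) μ + μ) * (star u ⬝ᵥ cplx Q *ᵥ x)) := by
        simp [smul_eq_mul]; ring
      rw [this, hc, hμre]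
      simp
    have := cplx_posdef_re hQ hu0
    rw [he] at this
    simp at this

end Bwd


open scoped ComplexOrder


section Fwd

variable (Ac : Matrix (Fin n) (Fin n) ℂ)

/-- the eigenvalues -/
def Lam : Finset ℂ := Ac.charpoly.roots.toFinset

/-- the annihilating polynomial -/
def Fpoly : ℂ[X] := ∏ μ ∈ Lam Ac, (X - C μ) ^ n

lemma charpoly_dvd_Fpoly : Ac.charpoly ∣ Fpoly Ac := by
  have hsplit : Ac.charpoly
      = (Multiset.map (fun a => X - C a) Ac.charpoly.roots).prod :=
    (IsAlgClosed.splits _).eq_prod_roots_of_monic (Matrix.charpoly_monic Ac)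
  rw [hsplit, Finset.prod_multiset_map_count]
  apply Finset.prod_dvd_prod_of_dvd
  intro μ _
  apply pow_dvd_pow
  calc Ac.charpoly.roots.count μ ≤ Multiset.card Ac.charpoly.roots :=
        Multiset.count_le_card μ _
    _ ≤ Ac.charpoly.natDegree := card_roots' _
    _ = n := by rw [Matrix.charpoly_natDegree_eq_dim, Fintype.card_fin]

lemma aeval_Fpoly : aeval Ac (Fpoly Ac) = 0 := by
  obtain ⟨c, hc⟩ := charpoly_dvd_Fpoly Ac
  rw [hc, _root_.map_mul, Matrix.aeval_self_charpoly, zero_mul]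

lemma root_det {μ : ℂ} (hμ : μ ∈ Lam Ac) : (Ac - μ • 1).det = 0 := by
  have hroot : Ac.charpoly.IsRoot μ := by
    have := Multiset.mem_toFinset.mp hμ
    exact (Polynomial.mem_roots (Matrix.charpoly_monic Ac).ne_zero).mp this
  have heval : Ac.charpoly.eval μ = (μ • (1 : Matrix (Fin n) (Fin n) ℂ) - Ac).det := by
    rw [Matrix.charpoly, ← Polynomial.coe_evalRingHom, RingHom.map_det]
    congr 1
    ext i j
    by_cases h : i = j <;>
      simp [Matrix.charmatrix_apply, RingHom.mapMatrix_apply, Matrix.map_apply,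
        Matrix.one_apply, Matrix.smul_apply, h, Matrix.diagonal_apply]
  have h0 : (μ • (1 : Matrix (Fin n) (Fin n) ℂ) - Ac).det = 0 := by
    rw [← heval]; exact hroot
  have : Ac - μ • 1 = -(μ • (1 : Matrix (Fin n) (Fin n) ℂ) - Ac) := (neg_sub _ _).symm
  rw [this, Matrix.det_neg, h0, mul_zero]

/-- existence of the CRT interpolation polynomials -/
lemma exists_projpoly : ∀ μ : ℂ, ∃ p : ℂ[X], μ ∈ Lam Ac →
    ((X - C μ) ^ n ∣ (1 - p)) ∧ (∀ ν ∈ Lam Ac, ν ≠ μ → (X - C ν) ^ n ∣ p)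
      ∧ (Fpoly Ac ∣ (X - C μ) ^ n * p) := by
  intro μ
  by_cases hμ : μ ∈ Lam Ac
  · set q : ℂ[X] := ∏ ν ∈ (Lam Ac).erase μ, (X - C ν) ^ n with hq
    have hcop : IsCoprime ((X - C μ) ^ n) q := by
      apply IsCoprime.prod_right
      intro ν hν
      have hne : μ ≠ ν := fun h => (Finset.ne_of_mem_erase hν) h.symm
      exact (Polynomial.pairwise_coprime_X_sub_C Function.injective_id hne).pow
    obtain ⟨a, b, hab⟩ := hcop
    refine ⟨b * q, fun _ => ⟨⟨a, ?_⟩, fun ν hν hνμ => ?_, ⟨b, ?_⟩⟩⟩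
    · rw [← hab]; ring
    · exact Dvd.dvd.mul_left (Finset.dvd_prod_of_mem _ (Finset.mem_erase.mpr ⟨hνμ, hν⟩)) b
    · rw [Fpoly, ← Finset.mul_prod_erase _ _ hμ, ← hq]; ring
  · exact ⟨0, fun h => absurd h hμ⟩

/-- the CRT projection polynomials -/
def projpoly (μ : ℂ) : ℂ[X] := (exists_projpoly Ac μ).choose

/-- the spectral projections -/
def proj (μ : ℂ) : Matrix (Fin n) (Fin n) ℂ := aeval Ac (projpoly Ac μ)

lemma proj_sum : ∑ μ ∈ Lam Ac, proj Ac μ = 1 := by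
  have hdvd : Fpoly Ac ∣ (∑ μ ∈ Lam Ac, projpoly Ac μ) - 1 := by
    apply Finset.prod_dvd_of_coprime
      (t := Lam Ac) (s := fun ν => (X - C ν) ^ n)
    · intro μ hμ ν hν hne
      exact (Polynomial.pairwise_coprime_X_sub_C Function.injective_id hne).pow
    · intro ν hν
      have h1 : (X - C ν) ^ n ∣ (projpoly Ac ν - 1) := by
        obtain ⟨h, _, _⟩ := (exists_projpoly Ac ν).choose_spec hν
        obtain ⟨a, ha⟩ := h
        exact ⟨-a, by rw [projpoly, mul_neg, ← ha]; ring⟩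
      have h2 : (X - C ν) ^ n ∣ ∑ μ ∈ (Lam Ac).erase ν, projpoly Ac μ := by
        apply Finset.dvd_sum
        intro μ hμ
        obtain ⟨_, h, _⟩ := (exists_projpoly Ac μ).choose_spec (Finset.mem_of_mem_erase hμ)
        exact h ν hν (Finset.ne_of_mem_erase hμ).symm
      have : (∑ μ ∈ Lam Ac, projpoly Ac μ) - 1
          = (∑ μ ∈ (Lam Ac).erase ν, projpoly Ac μ) + (projpoly Ac ν - 1) := by
        rw [← Finset.add_sum_erase _ _ hν]; ring
      rw [this]
      exact dvd_add h2 h1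
  obtain ⟨c, hc⟩ := hdvd
  have := congrArg (aeval Ac) hc
  rw [_root_.map_mul, aeval_Fpoly, zero_mul, map_sub, map_sum, _root_.map_one,
    sub_eq_zero] at this
  exact this

lemma pow_mul_proj {μ : ℂ} (hμ : μ ∈ Lam Ac) :
    (Ac - μ • 1) ^ n * proj Ac μ = 0 := by
  obtain ⟨_, _, hdvd⟩ := (exists_projpoly Ac μ).choose_spec hμ
  obtain ⟨c, hc⟩ := hdvd
  have := congrArg (aeval Ac) hc
  rw [_root_.map_mul, _root_.map_mul, aeval_Fpoly, zero_mul, map_pow, map_sub, aeval_X,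
    aeval_C, Algebra.algebraMap_eq_smul_one] at this
  exact this

lemma proj_comm (μ : ℂ) : proj Ac μ * Ac = Ac * proj Ac μ := by
  have h1 : proj Ac μ * Ac = aeval Ac (projpoly Ac μ * X) := by
    rw [_root_.map_mul, aeval_X, proj]
  have h2 : Ac * proj Ac μ = aeval Ac (X * projpoly Ac μ) := by
    rw [_root_.map_mul, aeval_X, proj]
  rw [h1, h2, mul_comm (projpoly Ac μ) X]

end Fwd


/-- squared norm of a complex vector -/
def nn (v : Fin n → ℂ) : ℝ := ∑ i, Complex.normSq (v i)

lemma nn_nonneg (v : Fin n → ℂ) : 0 ≤ nn v :=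
  Finset.sum_nonneg fun i _ => Complex.normSq_nonneg _

lemma dot_self_eq_nn (v : Fin n → ℂ) : star v ⬝ᵥ v = ((nn v : ℝ) : ℂ) := by
  simp only [dotProduct, Pi.star_apply, nn, Complex.ofReal_sum]
  refine Finset.sum_congr rfl fun i _ => ?_
  rw [RCLike.star_def, mul_comm, Complex.mul_conj]

lemma nn_eq_zero {v : Fin n → ℂ} (h : nn v = 0) : v = 0 := by
  have : star v ⬝ᵥ v = 0 := by rw [dot_self_eq_nn, h, Complex.ofReal_zero]
  exact dotProduct_star_self_eq_zero.mp this

lemma nn_pos {v : Fin n → ℂ} (h : v ≠ 0) : 0 < nn v := by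
  rcases lt_or_eq_of_le (nn_nonneg v) with h1 | h1
  · exact h1
  · exact absurd (nn_eq_zero h1.symm) h

/-- Cauchy–Schwarz for the star dot product -/
lemma cauchy (u v : Fin n → ℂ) :
    ‖star u ⬝ᵥ v‖ ≤ Real.sqrt (nn u) * Real.sqrt (nn v) := by
  have hid : (star u ⬝ᵥ v)
      = inner (𝕜 := ℂ) (WithLp.toLp 2 u : EuclideanSpace ℂ (Fin n))
          (WithLp.toLp 2 v : EuclideanSpace ℂ (Fin n)) := by
    simp only [dotProduct, Pi.star_apply, PiLp.inner_apply, RCLike.inner_apply,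
      RCLike.star_def]
    exact Finset.sum_congr rfl fun i _ => mul_comm _ _
  have hnu : Real.sqrt (nn u) = ‖(WithLp.toLp 2 u : EuclideanSpace ℂ (Fin n))‖ := by
    rw [EuclideanSpace.norm_eq]
    congr 1
    exact Finset.sum_congr rfl fun i _ => by
      simp [Complex.normSq_eq_norm_sq]
  have hnv : Real.sqrt (nn v) = ‖(WithLp.toLp 2 v : EuclideanSpace ℂ (Fin n))‖ := by
    rw [EuclideanSpace.norm_eq]
    congr 1
    exact Finset.sum_congr rfl fun i _ => by
      simp [Complex.normSq_eq_norm_sq]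
  rw [hid, hnu, hnv]
  exact norm_inner_le_norm (𝕜 := ℂ) _ _

/-- the key summation estimate -/
lemma seq_bound {ε : ℝ} (hε : 0 < ε) (w : ℕ → Fin n → ℂ) (hlast : w n = 0) :
    ∑ j ∈ Finset.range n, (((ε ^ j)⁻¹) ^ 2) * (star (w j) ⬝ᵥ (w (j + 1))).re
      ≤ ε * ∑ j ∈ Finset.range n, (((ε ^ j)⁻¹) ^ 2) * nn (w j) := by
  set e : ℕ → ℝ := fun j => (ε ^ j)⁻¹ with he
  have he_pos : ∀ j, 0 < e j := fun j => by positivity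
  set g : ℕ → ℝ := fun j => (e j) ^ 2 * nn (w j) with hg
  have hg_nonneg : ∀ j, 0 ≤ g j := fun j => by
    have := nn_nonneg (w j); positivity
  have hterm : ∀ j, (e j) ^ 2 * (star (w j) ⬝ᵥ (w (j + 1))).re
      ≤ ε / 2 * (g j + g (j + 1)) := by
    intro j
    have h1 : (star (w j) ⬝ᵥ (w (j + 1))).re ≤ Real.sqrt (nn (w j)) * Real.sqrt (nn (w (j+1))) :=
      le_trans (Complex.re_le_norm _) (cauchy _ _)
    have hsq : ∀ k, Real.sqrt (nn (w k)) ^ 2 = nn (w k) := fun k =>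
      Real.sq_sqrt (nn_nonneg _)
    have hab : (e j) ^ 2 * (Real.sqrt (nn (w j)) * Real.sqrt (nn (w (j+1))))
        ≤ ε / 2 * (g j + g (j + 1)) := by
      have hmul : 2 * (e j * Real.sqrt (nn (w j))) * (e (j+1) * Real.sqrt (nn (w (j+1))))
          ≤ (e j * Real.sqrt (nn (w j))) ^ 2 + (e (j+1) * Real.sqrt (nn (w (j+1)))) ^ 2 :=
        two_mul_le_add_sq _ _
      have hee : e j ^ 2 = ε * (e j * e (j + 1)) := by
        rw [he]
        field_simp
        ring
      have hgj : (e j * Real.sqrt (nn (w j))) ^ 2 = g j := by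
        rw [mul_pow, hsq j]
      have hgj1 : (e (j+1) * Real.sqrt (nn (w (j+1)))) ^ 2 = g (j+1) := by
        rw [mul_pow, hsq (j+1)]
      calc (e j) ^ 2 * (Real.sqrt (nn (w j)) * Real.sqrt (nn (w (j+1))))
          = ε / 2 * (2 * (e j * Real.sqrt (nn (w j))) * (e (j+1) * Real.sqrt (nn (w (j+1))))) := by
            rw [hee]; ring
        _ ≤ ε / 2 * ((e j * Real.sqrt (nn (w j))) ^ 2 + (e (j+1) * Real.sqrt (nn (w (j+1)))) ^ 2) := by
            apply mul_le_mul_of_nonneg_left hmul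
            linarith
        _ = ε / 2 * (g j + g (j + 1)) := by rw [hgj, hgj1]
    calc (e j) ^ 2 * (star (w j) ⬝ᵥ (w (j + 1))).re
        ≤ (e j) ^ 2 * (Real.sqrt (nn (w j)) * Real.sqrt (nn (w (j+1)))) := by
          apply mul_le_mul_of_nonneg_left h1
          positivity
      _ ≤ ε / 2 * (g j + g (j + 1)) := hab
  calc ∑ j ∈ Finset.range n, (e j) ^ 2 * (star (w j) ⬝ᵥ (w (j + 1))).re
      ≤ ∑ j ∈ Finset.range n, ε / 2 * (g j + g (j + 1)) :=
        Finset.sum_le_sum fun j _ => hterm j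
    _ = ε / 2 * (∑ j ∈ Finset.range n, g j + ∑ j ∈ Finset.range n, g (j + 1)) := by
        rw [← Finset.sum_add_distrib, Finset.mul_sum]
    _ ≤ ε * ∑ j ∈ Finset.range n, g j := by
        have h2 : ∑ j ∈ Finset.range n, g (j + 1) ≤ ∑ j ∈ Finset.range n, g j := by
          have hs : ∑ j ∈ Finset.range (n + 1), g j
              = ∑ j ∈ Finset.range n, g (j + 1) + g 0 := Finset.sum_range_succ' g n
          have hs2 : ∑ j ∈ Finset.range (n + 1), g j
              = ∑ j ∈ Finset.range n, g j + g n := Finset.sum_range_succ g n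
          have hgn : g n = 0 := by rw [hg]; simp [hlast, nn]
          have := hg_nonneg 0
          nlinarith
        have hS_nonneg : 0 ≤ ∑ j ∈ Finset.range n, g j :=
          Finset.sum_nonneg fun j _ => hg_nonneg j
        nlinarith

section Fwd2

lemma pow_ker (B : Matrix (Fin n) (Fin n) ℂ)
    (h2 : ∀ v : Fin n → ℂ, (B * B) *ᵥ v = 0 → B *ᵥ v = 0) :
    ∀ (k : ℕ) (v : Fin n → ℂ), (B ^ k) *ᵥ v = 0 → B *ᵥ v = 0 := by
  intro k
  induction k with
  | zero =>
      intro v hv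
      rw [pow_zero, Matrix.one_mulVec] at hv
      rw [hv, Matrix.mulVec_zero]
  | succ k ih =>
      intro v hv
      have h3 : (B ^ k) *ᵥ (B *ᵥ v) = 0 := by
        rw [Matrix.mulVec_mulVec, ← pow_succ]
        exact hv
      have h4 := ih _ h3
      apply h2
      rw [← Matrix.mulVec_mulVec]
      exact h4

lemma sum_mulVec' {ι : Type*} (s : Finset ι) (M : ι → Matrix (Fin n) (Fin n) ℂ)
    (v : Fin n → ℂ) : (∑ i ∈ s, M i) *ᵥ v = ∑ i ∈ s, M i *ᵥ v := by
  funext j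
  simp only [mulVec, dotProduct, Finset.sum_apply, Matrix.sum_apply, Finset.sum_mul]
  rw [Finset.sum_comm]

lemma dot_sum' {ι : Type*} (s : Finset ι) (v : Fin n → ℂ) (w : ι → Fin n → ℂ) :
    v ⬝ᵥ (∑ i ∈ s, w i) = ∑ i ∈ s, v ⬝ᵥ w i := by
  simp only [dotProduct, Finset.sum_apply, Finset.mul_sum]
  rw [Finset.sum_comm]

variable (Ac : Matrix (Fin n) (Fin n) ℂ)

/-- scaling parameter -/
def eps (μ : ℂ) : ℝ := if μ.re = 0 then 1 else -μ.re

/-- scaling coefficients -/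
def coefc (μ : ℂ) (j : ℕ) : ℝ := ((eps μ ^ j)⁻¹) ^ 2

def Mmat (μ : ℂ) (j : ℕ) : Matrix (Fin n) (Fin n) ℂ := (Ac - μ • 1) ^ j * proj Ac μ

/-- the Lyapunov certificate -/
def Pmat : Matrix (Fin n) (Fin n) ℂ :=
  ∑ μ ∈ Lam Ac, ∑ j ∈ Finset.range n,
    ((coefc μ j : ℝ) : ℂ) • ((Mmat Ac μ j)ᴴ * Mmat Ac μ j)

lemma coefc_nonneg (μ : ℂ) (j : ℕ) : 0 ≤ coefc μ j := sq_nonneg _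

lemma coefc_zero (μ : ℂ) : coefc μ 0 = 1 := by simp [coefc]

lemma quad_Pmat (x y : Fin n → ℂ) :
    star x ⬝ᵥ Pmat Ac *ᵥ y
      = ∑ μ ∈ Lam Ac, ∑ j ∈ Finset.range n,
          ((coefc μ j : ℝ) : ℂ) * (star (Mmat Ac μ j *ᵥ x) ⬝ᵥ (Mmat Ac μ j *ᵥ y)) := by
  rw [Pmat, sum_mulVec', dot_sum']
  refine Finset.sum_congr rfl fun μ _ => ?_
  rw [sum_mulVec', dot_sum']
  refine Finset.sum_congr rfl fun j _ => ?_
  rw [Matrix.smul_mulVec, dotProduct_smul, smul_eq_mul]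
  congr 1
  rw [← Matrix.mulVec_mulVec, ip_shift, conjTranspose_conjTranspose]

lemma re_quad_self (x : Fin n → ℂ) :
    (star x ⬝ᵥ Pmat Ac *ᵥ x).re
      = ∑ μ ∈ Lam Ac, ∑ j ∈ Finset.range n, coefc μ j * nn (Mmat Ac μ j *ᵥ x) := by
  rw [quad_Pmat, Complex.re_sum]
  refine Finset.sum_congr rfl fun μ _ => ?_
  rw [Complex.re_sum]
  refine Finset.sum_congr rfl fun j _ => ?_
  rw [dot_self_eq_nn, ← Complex.ofReal_mul]
  exact Complex.ofReal_re _

lemma Mmat_zero_eq (μ : ℂ) : Mmat Ac μ 0 = proj Ac μ := by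
  rw [Mmat, pow_zero, one_mul]

lemma Pmat_posdef {x : Fin n → ℂ} (hx : x ≠ 0) :
    0 < (star x ⬝ᵥ Pmat Ac *ᵥ x).re := by
  have hn : 0 < n := by
    rcases Nat.eq_zero_or_pos n with h | h
    · exfalso
      apply hx
      funext i
      subst h
      exact Fin.elim0 i
    · exact h
  have hexists : ∃ μ ∈ Lam Ac, proj Ac μ *ᵥ x ≠ 0 := by
    by_contra hcon
    push_neg at hcon
    apply hx
    calc x = (1 : Matrix (Fin n) (Fin n) ℂ) *ᵥ x := (Matrix.one_mulVec x).symm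
      _ = (∑ μ ∈ Lam Ac, proj Ac μ) *ᵥ x := by rw [proj_sum]
      _ = ∑ μ ∈ Lam Ac, proj Ac μ *ᵥ x := sum_mulVec' _ _ _
      _ = 0 := Finset.sum_eq_zero hcon
  obtain ⟨μ0, hμ0, hproj⟩ := hexists
  rw [re_quad_self]
  apply Finset.sum_pos' (fun μ _ => Finset.sum_nonneg fun j _ =>
    mul_nonneg (coefc_nonneg μ j) (nn_nonneg _))
  refine ⟨μ0, hμ0, ?_⟩
  apply Finset.sum_pos' (fun j _ => mul_nonneg (coefc_nonneg μ0 j) (nn_nonneg _))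
  refine ⟨0, Finset.mem_range.mpr hn, ?_⟩
  rw [coefc_zero, one_mul, Mmat_zero_eq]
  exact nn_pos hproj

lemma Pmat_lyap (hRe : ∀ μ ∈ Lam Ac, μ.re ≤ 0)
    (hSS : ∀ μ ∈ Lam Ac, μ.re = 0 → ∀ v : Fin n → ℂ,
      ((Ac - μ • 1) * (Ac - μ • 1)) *ᵥ v = 0 → (Ac - μ • 1) *ᵥ v = 0)
    (x : Fin n → ℂ) : (star x ⬝ᵥ Pmat Ac *ᵥ (Ac *ᵥ x)).re ≤ 0 := by
  rw [quad_Pmat, Complex.re_sum]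
  apply Finset.sum_nonpos
  intro μ hμ
  set N : Matrix (Fin n) (Fin n) ℂ := Ac - μ • 1 with hN
  set w : ℕ → Fin n → ℂ := fun j => Mmat Ac μ j *ᵥ x with hw
  have hMA : ∀ j, Mmat Ac μ j *ᵥ (Ac *ᵥ x) = w (j + 1) + μ • w j := by
    intro j
    have hAp : Ac * proj Ac μ = N * proj Ac μ + μ • proj Ac μ := by
      rw [hN, Matrix.sub_mul, smul_mul_assoc, one_mul, sub_add_cancel]
    have hmat : Mmat Ac μ j * Ac = Mmat Ac μ (j + 1) + μ • Mmat Ac μ j := by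
      rw [Mmat, Mmat, mul_assoc, proj_comm, hAp, mul_add, mul_smul_comm,
        ← mul_assoc, ← pow_succ, ← hN]
    rw [Matrix.mulVec_mulVec, hmat, Matrix.add_mulVec, Matrix.smul_mulVec]
  have hwn : w n = 0 := by
    rw [hw]
    show Mmat Ac μ n *ᵥ x = 0
    rw [Mmat, ← hN, pow_mul_proj Ac hμ, Matrix.zero_mulVec]
  have hval : ∀ j, (((coefc μ j : ℝ) : ℂ) * (star (w j) ⬝ᵥ (Mmat Ac μ j *ᵥ (Ac *ᵥ x)))).re
      = coefc μ j * ((star (w j) ⬝ᵥ w (j + 1)).re + μ.re * nn (w j)) := by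
    intro j
    rw [hMA j, dotProduct_add, dotProduct_smul, smul_eq_mul, dot_self_eq_nn]
    simp [Complex.mul_re, Complex.add_re, Complex.add_im, Complex.mul_im]
    try ring
  calc (∑ j ∈ Finset.range n,
        (((coefc μ j : ℝ) : ℂ) * (star (Mmat Ac μ j *ᵥ x) ⬝ᵥ (Mmat Ac μ j *ᵥ (Ac *ᵥ x))))).re
      = ∑ j ∈ Finset.range n, coefc μ j * ((star (w j) ⬝ᵥ w (j + 1)).re + μ.re * nn (w j)) := by
        rw [Complex.re_sum]
        exact Finset.sum_congr rfl fun j _ => hval j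
    _ ≤ 0 := by
        by_cases hμre : μ.re = 0
        · have hw1 : w 1 = 0 := by
            have hker := hSS μ hμ hμre
            have h0 : (N ^ n) *ᵥ (proj Ac μ *ᵥ x) = 0 := by
              rw [Matrix.mulVec_mulVec, pow_mul_proj Ac hμ, Matrix.zero_mulVec]
            have hN1 := pow_ker N hker n _ h0
            show Mmat Ac μ 1 *ᵥ x = 0
            rw [Mmat, ← hN, pow_one, ← Matrix.mulVec_mulVec]
            exact hN1
          have hwj : ∀ j, w (j + 1) = 0 := by
            intro j
            show Mmat Ac μ (j + 1) *ᵥ x = 0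
            have : Mmat Ac μ (j + 1) = N ^ j * Mmat Ac μ 1 := by
              rw [Mmat, Mmat, ← hN, pow_one, pow_succ, mul_assoc]
            rw [this, ← Matrix.mulVec_mulVec]
            have : Mmat Ac μ 1 *ᵥ x = 0 := hw1
            rw [this, Matrix.mulVec_zero]
          apply le_of_eq
          apply Finset.sum_eq_zero
          intro j _
          rw [hwj j, dotProduct_zero, hμre]
          simp
        · have hle : μ.re < 0 := lt_of_le_of_ne (hRe μ hμ) hμre
          have hε : eps μ = -μ.re := if_neg hμre
          have hεpos : 0 < eps μ := by rw [hε]; linarith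
          have hseq := seq_bound hεpos w hwn
          have hsplit : ∑ j ∈ Finset.range n,
              coefc μ j * ((star (w j) ⬝ᵥ w (j + 1)).re + μ.re * nn (w j))
              = (∑ j ∈ Finset.range n, coefc μ j * (star (w j) ⬝ᵥ w (j + 1)).re)
                + μ.re * ∑ j ∈ Finset.range n, coefc μ j * nn (w j) := by
            rw [Finset.mul_sum, ← Finset.sum_add_distrib]
            exact Finset.sum_congr rfl fun j _ => by ring
          have hSnn : 0 ≤ ∑ j ∈ Finset.range n, coefc μ j * nn (w j) :=
            Finset.sum_nonneg fun j _ => mul_nonneg (coefc_nonneg μ j) (nn_nonneg _)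
          have hseq' : ∑ j ∈ Finset.range n, coefc μ j * (star (w j) ⬝ᵥ w (j + 1)).re
              ≤ eps μ * ∑ j ∈ Finset.range n, coefc μ j * nn (w j) := by
            have : coefc μ = fun j => ((eps μ ^ j)⁻¹) ^ 2 := rfl
            rw [this]
            exact hseq
          rw [hsplit]
          rw [hε] at hseq'
          linarith

lemma Pmat_herm : (Pmat Ac)ᴴ = Pmat Ac := by
  rw [Pmat]
  rw [Matrix.conjTranspose_sum]
  refine Finset.sum_congr rfl fun μ _ => ?_
  rw [Matrix.conjTranspose_sum]
  refine Finset.sum_congr rfl fun j _ => ?_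
  rw [Matrix.conjTranspose_smul, Matrix.conjTranspose_mul, conjTranspose_conjTranspose]
  congr 1
  simp

end Fwd2

section RealPart

variable (A : Matrix (Fin n) (Fin n) ℝ)

def toC (x : Fin n → ℝ) : Fin n → ℂ := fun i => (x i : ℂ)

lemma toC_ne_zero {x : Fin n → ℝ} (hx : x ≠ 0) : toC x ≠ 0 := by
  intro h
  apply hx
  funext i
  have := congrFun h i
  simpa [toC] using this

lemma toC_mulVec (x : Fin n → ℝ) : cplx A *ᵥ toC x = toC (A *ᵥ x) := by
  funext i
  simp only [mulVec, dotProduct, toC, cplx, Matrix.map_apply]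
  push_cast
  rfl

/-- the real part of the Lyapunov certificate -/
def Preal : Matrix (Fin n) (Fin n) ℝ := Matrix.of fun i j => ((Pmat (cplx A)) i j).re

lemma dot_Preal (x y : Fin n → ℝ) :
    x ⬝ᵥ Preal A *ᵥ y = (star (toC x) ⬝ᵥ Pmat (cplx A) *ᵥ toC y).re := by
  simp only [dotProduct, mulVec, Finset.mul_sum, Complex.re_sum]
  refine Finset.sum_congr rfl fun i _ => Finset.sum_congr rfl fun j _ => ?_
  simp [toC, Preal, Complex.mul_re, Complex.conj_ofReal, Matrix.of_apply]
  try ring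

lemma Preal_posdef : (Preal A).PosDef := by
  refine PosDef.of_dotProduct_mulVec_pos ?_ ?_
  · show (Preal A)ᴴ = Preal A
    have hH := Pmat_herm (cplx A)
    ext i j
    have hij : Pmat (cplx A) i j = star (Pmat (cplx A) j i) := by
      rw [← Matrix.conjTranspose_apply, hH]
    simp only [conjTranspose_apply, Preal, Matrix.of_apply, RCLike.star_def]
    rw [hij]
    simp
  · intro x hx
    have h1 : star x ⬝ᵥ Preal A *ᵥ x = x ⬝ᵥ Preal A *ᵥ x := by
      simp [star_trivial]
    rw [h1, dot_Preal]
    exact Pmat_posdef (cplx A) (toC_ne_zero hx)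

lemma Preal_lyap (hS : A.IsStable) (x : Fin n → ℝ) :
    x ⬝ᵥ (Preal A * A) *ᵥ x ≤ 0 := by
  rw [← Matrix.mulVec_mulVec, dot_Preal, ← toC_mulVec]
  apply Pmat_lyap
  · intro μ hμ
    exact (hS μ (root_det _ hμ)).1
  · intro μ hμ hre v hv
    exact (hS μ (root_det _ hμ)).2 hre v hv

lemma mv_dot (M : Matrix (Fin n) (Fin n) ℝ) (a b : Fin n → ℝ) :
    a ⬝ᵥ Mᵀ *ᵥ b = (M *ᵥ a) ⬝ᵥ b := by
  rw [dotProduct_mulVec, vecMul_transpose]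

theorem forward (hS : A.IsStable) :
    ∃ J R Q : Matrix (Fin n) (Fin n) ℝ,
      Jᵀ = -J ∧ R.PosSemidef ∧ Q.PosDef ∧ A = (J - R) * Q := by
  set P := Preal A with hP
  have hPd : P.PosDef := Preal_posdef A
  have hPsymm : Pᵀ = P := hPd.1
  have hdet : IsUnit P.det := isUnit_iff_ne_zero.mpr (ne_of_gt hPd.det_pos)
  set W := A * P⁻¹ with hW
  have hWT : Wᵀ = P⁻¹ * Aᵀ := by
    rw [hW, Matrix.transpose_mul, Matrix.transpose_nonsing_inv, hPsymm]
  have hWx : ∀ x : Fin n → ℝ, x ⬝ᵥ W *ᵥ x ≤ 0 := by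
    intro x
    set y := P⁻¹ *ᵥ x with hy
    have hxy : x = P *ᵥ y := by
      rw [hy, Matrix.mulVec_mulVec, Matrix.mul_nonsing_inv _ hdet, Matrix.one_mulVec]
    have t1 : x ⬝ᵥ W *ᵥ x = y ⬝ᵥ (P * A) *ᵥ y := by
      calc x ⬝ᵥ W *ᵥ x = x ⬝ᵥ A *ᵥ (P⁻¹ *ᵥ x) := by
            rw [hW, ← Matrix.mulVec_mulVec]
        _ = (P *ᵥ y) ⬝ᵥ A *ᵥ y := by rw [← hy, ← hxy]
        _ = y ⬝ᵥ Pᵀ *ᵥ (A *ᵥ y) := by rw [mv_dot]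
        _ = y ⬝ᵥ (P * A) *ᵥ y := by rw [hPsymm, Matrix.mulVec_mulVec]
    rw [t1]
    exact Preal_lyap A hS y
  refine ⟨(2:ℝ)⁻¹ • (W - Wᵀ), (2:ℝ)⁻¹ • (-W - Wᵀ), P, ?_, ?_, hPd, ?_⟩
  · ext i j
    simp [Matrix.transpose_apply, Matrix.smul_apply, Matrix.sub_apply, Matrix.neg_apply]
    ring
  · refine PosSemidef.of_dotProduct_mulVec_nonneg ?_ ?_
    · show ((2:ℝ)⁻¹ • (-W - Wᵀ))ᴴ = (2:ℝ)⁻¹ • (-W - Wᵀ)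
      ext i j
      simp [conjTranspose_apply, Matrix.smul_apply, Matrix.sub_apply, Matrix.neg_apply,
        Matrix.transpose_apply]
      ring
    · intro x
      have hsx : star x = x := by simp [star_trivial]
      have hv : x ⬝ᵥ ((2:ℝ)⁻¹ • (-W - Wᵀ)) *ᵥ x
          = (2:ℝ)⁻¹ * (-(x ⬝ᵥ W *ᵥ x) - x ⬝ᵥ Wᵀ *ᵥ x) := by
        rw [Matrix.smul_mulVec, dotProduct_smul, smul_eq_mul]
        congr 1
        rw [Matrix.sub_mulVec, dotProduct_sub, Matrix.neg_mulVec, dotProduct_neg]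
      have ht2 : x ⬝ᵥ Wᵀ *ᵥ x = x ⬝ᵥ W *ᵥ x := by
        rw [mv_dot, dotProduct_comm]
      rw [hsx, hv, ht2]
      have := hWx x
      linarith
  · have hJR : (2:ℝ)⁻¹ • (W - Wᵀ) - (2:ℝ)⁻¹ • (-W - Wᵀ) = W := by
      ext i j
      simp [Matrix.sub_apply, Matrix.smul_apply, Matrix.neg_apply, Matrix.transpose_apply]
      ring
    rw [hJR, hW, Matrix.mul_assoc, Matrix.nonsing_inv_mul _ hdet, Matrix.mul_one]

end RealPart

end StableDH

/-- A real n×n matrix is stable iff it is a DH matrix. -/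
theorem stable_iff_dissipativeHamiltonian {n : ℕ} (A : Matrix (Fin n) (Fin n) ℝ) :
    A.IsStable ↔
      ∃ J R Q : Matrix (Fin n) (Fin n) ℝ,
        Jᵀ = -J ∧ R.PosSemidef ∧ Q.PosDef ∧ A = (J - R) * Q := by
  constructor
  · exact fun h => StableDH.forward A h
  · rintro ⟨J, R, Q, hJ, hR, hQ, hA⟩
    exact StableDH.backward hJ hR hQ A hA
end
end

section
/- Let A ∈ ℝⁿˣⁿ, B ∈ ℝⁿˣᵐ, and suppose (J, R, Q) with J skew-symmetric, R ⪰ 0, Q ≻ 0 satisfies (Iₙ − B B†)(A − (J − R)Q) = 0. Then for every Y ∈ ℝᵐˣⁿ, the matrix K = B†(A − (J − R)Q) − (I_m − B†B)Y satisfies A − BK = (J − R)Q, and hence A − BK is stable. -/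
open Matrix

noncomputable section

open ComplexOrder

variable {n : ℕ}

abbrev cpx (A : Matrix (Fin n) (Fin n) ℝ) : Matrix (Fin n) (Fin n) ℂ :=
  A.map Complex.ofReal

lemma cpx_mul (A B : Matrix (Fin n) (Fin n) ℝ) : cpx (A * B) = cpx A * cpx B :=
  Matrix.map_mul (L := A) (M := B) (f := Complex.ofRealHom)

lemma cpx_sub (A B : Matrix (Fin n) (Fin n) ℝ) : cpx (A - B) = cpx A - cpx B :=
  (Complex.ofRealHom.mapMatrix : Matrix (Fin n) (Fin n) ℝ →+* _).map_sub A B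

lemma cpx_conjTranspose (A : Matrix (Fin n) (Fin n) ℝ) : (cpx A)ᴴ = cpx Aᴴ := by
  ext i j
  simp [conjTranspose_apply, Matrix.map_apply]

lemma cpx_posSemidef {A : Matrix (Fin n) (Fin n) ℝ} (hA : A.PosSemidef) :
    (cpx A).PosSemidef := by
  obtain ⟨B, hB⟩ : ∃ B : Matrix (Fin n) (Fin n) ℝ, A = Bᴴ * B := by
    open scoped MatrixOrder in exact CStarAlgebra.nonneg_iff_eq_star_mul_self.mp hA.nonneg
  have : cpx A = (cpx B)ᴴ * cpx B := by
    rw [cpx_conjTranspose, ← cpx_mul, ← hB]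
  rw [this]
  exact Matrix.posSemidef_conjTranspose_mul_self _

lemma cpx_posDef {A : Matrix (Fin n) (Fin n) ℝ} (hA : A.PosDef) :
    (cpx A).PosDef := by
  have hps := cpx_posSemidef hA.posSemidef
  refine posDef_iff_dotProduct_mulVec.mpr ⟨hps.1, fun x hx => ?_⟩
  rcases lt_or_eq_of_le (hps.dotProduct_mulVec_nonneg x) with h | h
  · exact h
  · exfalso
    apply hx
    have h0 : star x ⬝ᵥ (cpx A).mulVec x = 0 := h.symm
    have hz := (hps.dotProduct_mulVec_zero_iff x).mp h0
    have hdet : (cpx A).det ≠ 0 := by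
      have : cpx A = Complex.ofRealHom.mapMatrix A := rfl
      rw [this, ← RingHom.map_det]
      simpa using ne_of_gt hA.det_pos
    have : (cpx A)⁻¹.mulVec ((cpx A).mulVec x) = x := by
      rw [Matrix.mulVec_mulVec, Matrix.nonsing_inv_mul _ (isUnit_iff_ne_zero.mpr hdet),
        Matrix.one_mulVec]
    rw [← this, hz, Matrix.mulVec_zero]

lemma shift (A : Matrix (Fin n) (Fin n) ℂ) (x y : Fin n → ℂ) :
    star (A.mulVec x) ⬝ᵥ y = star x ⬝ᵥ Aᴴ.mulVec y := by
  rw [star_mulVec, ← dotProduct_mulVec]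

-- the key eigen computation
lemma key (J R Q : Matrix (Fin n) (Fin n) ℝ) (hQH : (cpx Q)ᴴ = cpx Q)
    (μ : ℂ) (v : Fin n → ℂ)
    (hv : ((cpx J - cpx R) * cpx Q).mulVec v = μ • v) :
    μ * (star v ⬝ᵥ (cpx Q).mulVec v) =
      star ((cpx Q).mulVec v) ⬝ᵥ (cpx J).mulVec ((cpx Q).mulVec v)
      - star ((cpx Q).mulVec v) ⬝ᵥ (cpx R).mulVec ((cpx Q).mulVec v) := by
  set u := (cpx Q).mulVec v with hu
  have h1 : star u ⬝ᵥ (cpx J - cpx R).mulVec u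
      = star u ⬝ᵥ (cpx J).mulVec u - star u ⬝ᵥ (cpx R).mulVec u := by
    rw [Matrix.sub_mulVec, dotProduct_sub]
  have h2 : (cpx J - cpx R) *ᵥ (cpx Q *ᵥ v) = μ • v := by
    rw [Matrix.mulVec_mulVec, hv]
  rw [← h1, hu, shift, hQH, h2, Matrix.mulVec_smul, dotProduct_smul]
  rfl

lemma skew_re {J' : Matrix (Fin n) (Fin n) ℂ} (hJ' : J'ᴴ = -J') (u : Fin n → ℂ) :
    (star u ⬝ᵥ J'.mulVec u).re = 0 := by
  have h : (starRingEnd ℂ) (star u ⬝ᵥ J'.mulVec u) = -(star u ⬝ᵥ J'.mulVec u) := by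
    have h1 : star u ⬝ᵥ J'.mulVec u = star (star (J'.mulVec u) ⬝ᵥ u) :=
      star_dotProduct _ _
    calc (starRingEnd ℂ) (star u ⬝ᵥ J'.mulVec u)
        = star (J'.mulVec u) ⬝ᵥ u := by rw [h1]; exact star_star _
      _ = star u ⬝ᵥ J'ᴴ.mulVec u := shift _ _ _
      _ = -(star u ⬝ᵥ J'.mulVec u) := by rw [hJ', Matrix.neg_mulVec, dotProduct_neg]
  have := congrArg Complex.re h
  rw [Complex.conj_re, Complex.neg_re] at this
  linarith

theorem dh_isStable (J R Q : Matrix (Fin n) (Fin n) ℝ)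
    (hJ : Jᵀ = -J) (hR : R.PosSemidef) (hQ : Q.PosDef) :
    ((J - R) * Q).IsStable := by
  have hQ' := cpx_posDef hQ
  have hR' := cpx_posSemidef hR
  have hQH : (cpx Q)ᴴ = cpx Q := hQ'.1
  have hJ' : (cpx J)ᴴ = -(cpx J) := by
    rw [cpx_conjTranspose]
    have : (Jᴴ : Matrix (Fin n) (Fin n) ℝ) = -J := by
      rw [conjTranspose_eq_transpose_of_trivial]; exact hJ
    rw [this]
    ext i j; simp [Matrix.map_apply]
  have hRH : (cpx R)ᴴ = cpx R := hR'.1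
  have hmap : ((J - R) * Q).map Complex.ofReal = (cpx J - cpx R) * cpx Q := by
    rw [show ((J - R) * Q).map Complex.ofReal = cpx ((J - R) * Q) from rfl, cpx_mul, cpx_sub]
  intro μ hdet
  rw [hmap] at hdet
  -- quadratic form facts
  have hherm : ∀ x : Fin n → ℂ, (star x ⬝ᵥ (cpx Q).mulVec x).im = 0 := by
    intro x
    have := hQ'.posSemidef.dotProduct_mulVec_nonneg x
    rw [Complex.le_def] at this
    exact this.2.symm
  have hRre : ∀ x : Fin n → ℂ, 0 ≤ (star x ⬝ᵥ (cpx R).mulVec x).re ∧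
      (star x ⬝ᵥ (cpx R).mulVec x).im = 0 := by
    intro x
    have := hR'.dotProduct_mulVec_nonneg x
    rw [Complex.le_def] at this
    exact ⟨by simpa using this.1, this.2.symm⟩
  -- re of key identity for any eigenvector
  have main : ∀ v : Fin n → ℂ, ((cpx J - cpx R) * cpx Q).mulVec v = μ • v →
      μ.re * (star v ⬝ᵥ (cpx Q).mulVec v).re
        = -(star ((cpx Q).mulVec v) ⬝ᵥ (cpx R).mulVec ((cpx Q).mulVec v)).re := by
    intro v hv
    have hk := key J R Q hQH μ v hv
    have := congrArg Complex.re hk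
    rw [Complex.mul_re, hherm v, Complex.sub_re, skew_re hJ' ((cpx Q).mulVec v)] at this
    simpa using this
  constructor
  · -- Re μ ≤ 0
    obtain ⟨v, hv0, hv⟩ := (Matrix.exists_mulVec_eq_zero_iff).mpr hdet
    have hev : ((cpx J - cpx R) * cpx Q).mulVec v = μ • v := by
      have := hv
      rw [Matrix.sub_mulVec, Matrix.smul_mulVec, Matrix.one_mulVec, sub_eq_zero] at this
      exact this
    have h1 := main v hev
    have h2 : 0 < (star v ⬝ᵥ (cpx Q).mulVec v).re := by
      have := hQ'.dotProduct_mulVec_pos hv0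
      rw [Complex.lt_def] at this
      simpa using this.1
    have h3 := (hRre ((cpx Q).mulVec v)).1
    nlinarith
  · -- semisimplicity
    intro hre v hvv
    rw [hmap] at hvv ⊢
    set Δ := (cpx J - cpx R) * cpx Q - μ • 1 with hΔ
    set w := Δ.mulVec v with hw
    by_contra hwne
    have hΔw : Δ.mulVec w = 0 := by
      rw [hw, Matrix.mulVec_mulVec]
      exact hvv
    have hev : ((cpx J - cpx R) * cpx Q).mulVec w = μ • w := by
      have := hΔw
      rw [hΔ, Matrix.sub_mulVec, Matrix.smul_mulVec, Matrix.one_mulVec, sub_eq_zero] at this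
      exact this
    -- R kills Q w
    have h1 := main w hev
    rw [hre, zero_mul] at h1
    have hr := hRre ((cpx Q).mulVec w)
    have hRQw : (cpx R).mulVec ((cpx Q).mulVec w) = 0 := by
      apply (hR'.dotProduct_mulVec_zero_iff _).mp
      apply Complex.ext
      · simp only [Complex.zero_re]; linarith [hr.1]
      · simpa using hr.2
    -- hence J (Q w) = μ • w
    have hJQw : (cpx J).mulVec ((cpx Q).mulVec w) = μ • w := by
      have := hev
      rw [← Matrix.mulVec_mulVec, Matrix.sub_mulVec, hRQw, sub_zero] at this
      exact this
    -- now show star w ⬝ᵥ Q w = 0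
    have hMH : ((cpx J - cpx R) * cpx Q)ᴴ = cpx Q * (-(cpx J) - cpx R) := by
      rw [Matrix.conjTranspose_mul, Matrix.conjTranspose_sub, hJ', hRH, hQH]
    have hμ : μ + star μ = 0 := by
      apply Complex.ext <;> simp [hre]
    have hcc : (cpx Q * (-(cpx J) - cpx R)) *ᵥ ((cpx Q) *ᵥ w) = (-μ) • ((cpx Q) *ᵥ w) := by
      rw [← Matrix.mulVec_mulVec, Matrix.sub_mulVec, Matrix.neg_mulVec, hJQw, hRQw, sub_zero,
        Matrix.mulVec_neg, Matrix.mulVec_smul, neg_smul]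
    have hwexp : w = ((cpx J - cpx R) * cpx Q) *ᵥ v - μ • v := by
      rw [hw, hΔ, Matrix.sub_mulVec, Matrix.smul_mulVec, Matrix.one_mulVec]
    have key2 : star w ⬝ᵥ (cpx Q).mulVec w = 0 := by
      calc star w ⬝ᵥ (cpx Q).mulVec w
          = star (((cpx J - cpx R) * cpx Q) *ᵥ v) ⬝ᵥ (cpx Q) *ᵥ w
            - star (μ • v) ⬝ᵥ (cpx Q) *ᵥ w := by
            rw [← sub_dotProduct, ← star_sub, ← hwexp]
        _ = star v ⬝ᵥ ((cpx Q * (-(cpx J) - cpx R)) *ᵥ ((cpx Q) *ᵥ w))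
            - star μ * (star v ⬝ᵥ (cpx Q) *ᵥ w) := by
            rw [shift, hMH, star_smul, smul_dotProduct]
            rfl
        _ = (-μ) * (star v ⬝ᵥ (cpx Q) *ᵥ w) - star μ * (star v ⬝ᵥ (cpx Q) *ᵥ w) := by
            rw [hcc, dotProduct_smul]
            rfl
        _ = (-(μ + star μ)) * (star v ⬝ᵥ (cpx Q) *ᵥ w) := by ring
        _ = 0 := by rw [hμ, neg_zero, zero_mul]
    have := hQ'.dotProduct_mulVec_pos hwne
    rw [key2] at this
    exact lt_irrefl _ this


/-- every feedback of the DH parametrized form achieves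
A − BK = (J−R)Q and hence is stabilizing. -/
theorem dh_feedback_stabilizes {n m : ℕ} (A : Matrix (Fin n) (Fin n) ℝ)
    (B : Matrix (Fin n) (Fin m) ℝ) (Bd : Matrix (Fin m) (Fin n) ℝ)
    (hBd : IsMoorePenrose B Bd)
    (J R Q : Matrix (Fin n) (Fin n) ℝ)
    (hJ : Jᵀ = -J) (hR : R.PosSemidef) (hQ : Q.PosDef)
    (hfeas : (1 - B * Bd) * (A - (J - R) * Q) = 0)
    (Y : Matrix (Fin m) (Fin n) ℝ) :
    A - B * (Bd * (A - (J - R) * Q) - (1 - Bd * B) * Y) = (J - R) * Q ∧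
    (A - B * (Bd * (A - (J - R) * Q) - (1 - Bd * B) * Y)).IsStable := by
  have hK : A - B * (Bd * (A - (J - R) * Q) - (1 - Bd * B) * Y) = (J - R) * Q := by
    have h1 : B * Bd * (A - (J - R) * Q) = A - (J - R) * Q := by
      have := hfeas
      rw [sub_mul, one_mul, sub_eq_zero] at this
      exact this.symm
    have h2 : B * ((1 - Bd * B) * Y) = 0 := by
      rw [← Matrix.mul_assoc, Matrix.mul_sub, Matrix.mul_one, ← Matrix.mul_assoc, hBd.1,
        sub_self, Matrix.zero_mul]
    rw [Matrix.mul_sub, h2, ← Matrix.mul_assoc, h1]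
    abel
  refine ⟨hK, ?_⟩
  rw [hK]
  exact dh_isStable J R Q hJ hR hQ
end
end

section
/- Let A ∈ ℝⁿˣⁿ, B ∈ ℝⁿˣᵐ, and K ∈ ℝᵐˣⁿ with A − BK stable. Then there exist J skew-symmetric, R ⪰ 0, Q ≻ 0, and Y ∈ ℝᵐˣⁿ such that (Iₙ − B B†)(A − (J − R)Q) = 0 and K = B†(A − (J − R)Q) − (I_m − B†B)Y. -/
open Matrix

noncomputable section

section DHDevelopment

open Module Complex

set_option maxHeartbeats 1600000

/-- A raw Hermitian sesquilinear form. -/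
structure HermForm (V : Type) [AddCommGroup V] [Module ℂ V] where
  B : V → V → ℂ
  add_left : ∀ x y z, B (x + y) z = B x z + B y z
  smul_left : ∀ (c : ℂ) (x y : V), B (c • x) y = c * B x y
  conj_symm : ∀ x y, B y x = starRingEnd ℂ (B x y)

namespace HermForm

variable {V : Type} [AddCommGroup V] [Module ℂ V] (h : HermForm V)

lemma zero_left (y : V) : h.B 0 y = 0 := by
  have := h.smul_left 0 0 y
  simpa using this

lemma zero_right (x : V) : h.B x 0 = 0 := by
  rw [h.conj_symm, h.zero_left]; simp

lemma add_right (x y z : V) : h.B x (y + z) = h.B x y + h.B x z := by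
  rw [h.conj_symm, h.add_left, _root_.map_add, ← h.conj_symm, ← h.conj_symm]

lemma smul_right (c : ℂ) (x y : V) :
    h.B x (c • y) = starRingEnd ℂ c * h.B x y := by
  rw [h.conj_symm, h.smul_left, _root_.map_mul, ← h.conj_symm]

lemma im_diag (x : V) : (h.B x x).im = 0 := by
  have := h.conj_symm x x
  have h2 : (h.B x x).im = -(h.B x x).im := by
    conv_lhs => rw [this]
    simp
  linarith

lemma sum_left {ι : Type*} (s : Finset ι) (g : ι → V) (y : V) :
    h.B (∑ i ∈ s, g i) y = ∑ i ∈ s, h.B (g i) y := by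
  classical
  induction s using Finset.induction with
  | empty => simp [h.zero_left]
  | insert _ _ hnot ih => rw [Finset.sum_insert hnot, h.add_left, ih, Finset.sum_insert hnot]

/-- Positive definiteness. -/
def IsPDF : Prop := ∀ x : V, x ≠ 0 → 0 < (h.B x x).re

lemma IsPDF.nonneg {h : HermForm V} (hpd : h.IsPDF) (x : V) : 0 ≤ (h.B x x).re := by
  by_cases hx : x = 0
  · simp [hx, h.zero_left]
  · exact (hpd x hx).le

/-- Cauchy–Schwarz for positive definite Hermitian forms. -/
lemma IsPDF.cauchy_schwarz {h : HermForm V} (hpd : h.IsPDF) (x y : V) :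
    Complex.normSq (h.B x y) ≤ (h.B x x).re * (h.B y y).re := by
  by_cases hy : y = 0
  · simp [hy, h.zero_right]
  · set a := (h.B x x).re with ha
    set b := (h.B y y).re with hb
    have hbpos : 0 < b := hpd y hy
    set c := h.B x y with hc
    set z := (b : ℂ) • x - c • y with hz
    have hBy : h.B y y = (b : ℂ) := by
      have := h.im_diag y
      apply Complex.ext <;> simp [hb, this]
    have hyx : h.B y x = starRingEnd ℂ c := h.conj_symm x y
    have hzz : h.B z z = (b : ℂ) ^ 2 * h.B x x - (b : ℂ) * (c * starRingEnd ℂ c) := by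
      rw [hz]
      rw [show (b:ℂ) • x - c • y = (b:ℂ) • x + (-c) • y by rw [neg_smul, sub_eq_add_neg]]
      simp only [h.add_left, h.add_right, h.smul_left, h.smul_right, hyx, hBy,
        Complex.conj_ofReal, map_neg]
      ring
    have hnn : 0 ≤ (h.B z z).re := hpd.nonneg z
    have hre : (h.B z z).re = b ^ 2 * a - b * Complex.normSq c := by
      have hmc : c * starRingEnd ℂ c = (Complex.normSq c : ℂ) := Complex.mul_conj c
      have h2 : h.B z z = ((b ^ 2 : ℝ) : ℂ) * h.B x x - ((b * Complex.normSq c : ℝ) : ℂ) := by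
        rw [hzz, hmc]; push_cast; ring
      rw [h2, Complex.sub_re, Complex.re_ofReal_mul, Complex.ofReal_re, ha]
    nlinarith [Complex.normSq_nonneg c]

end HermForm

/-- Every finite-dimensional complex space has a positive definite Hermitian form. -/
lemma exists_pdf (V : Type) [AddCommGroup V] [Module ℂ V] [FiniteDimensional ℂ V] :
    ∃ h : HermForm V, h.IsPDF := by
  classical
  let b := Module.finBasis ℂ V
  refine ⟨⟨fun x y => ∑ i, b.repr x i * starRingEnd ℂ (b.repr y i), ?_, ?_, ?_⟩, ?_⟩
  · intro x y z; simp [_root_.map_add, add_mul, Finset.sum_add_distrib]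
  · intro c x y
    simp only [_root_.map_smul, Finsupp.smul_apply, smul_eq_mul, Finset.mul_sum, mul_assoc]
  · intro x y; simp [_root_.map_sum, mul_comm]
  · intro x hx
    have hrepr : b.repr x ≠ 0 := by
      intro hh
      apply hx
      have := congrArg b.repr.symm hh
      simpa using this
    obtain ⟨i, hi⟩ : ∃ i, b.repr x i ≠ 0 := by
      by_contra hcon
      push_neg at hcon
      exact hrepr (by ext i; simpa using hcon i)
    have : ∀ j, (b.repr x j * starRingEnd ℂ (b.repr x j)) = (Complex.normSq (b.repr x j) : ℂ) :=
      fun j => Complex.mul_conj _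
    have hre : (∑ j, b.repr x j * starRingEnd ℂ (b.repr x j)).re
        = ∑ j, Complex.normSq (b.repr x j) := by
      simp only [this]
      rw [Complex.re_sum]
      simp
    simp only [hre]
    exact Finset.sum_pos' (fun j _ => Complex.normSq_nonneg _)
      ⟨i, Finset.mem_univ i, Complex.normSq_pos.2 hi⟩

lemma riesz_bound {V : Type} [AddCommGroup V] [Module ℂ V]
    [FiniteDimensional ℂ V] (h : HermForm V) (hpd : h.IsPDF)
    (ψ : V →ₗ[ℂ] ℂ) :
    ∃ C : ℝ, 0 ≤ C ∧ ∀ y : V, Complex.normSq (ψ y) ≤ C * (h.B y y).re := by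
  letI : Inner ℂ V := ⟨fun x y => h.B y x⟩
  letI core : InnerProductSpace.Core ℂ V :=
    { conj_inner_symm := fun x y => show starRingEnd ℂ (h.B x y) = h.B y x from (h.conj_symm x y).symm
      re_inner_nonneg := fun x => by
        by_cases hx : x = 0
        · have : h.B x x = 0 := by
            have := h.smul_left 0 x x; simp [hx] at this ⊢
            simpa [hx] using this
          simp [show inner ℂ x x = h.B x x from rfl, this]
        · exact (hpd x hx).le
      definite := fun x hx => by
        by_contra hx0
        have := hpd x hx0
        rw [show inner ℂ x x = h.B x x from rfl] at hx
        rw [hx] at this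
        simp at this
      add_left := fun x y z => by
        show h.B z (x + y) = h.B z x + h.B z y
        rw [h.conj_symm, h.add_left, _root_.map_add, ← h.conj_symm, ← h.conj_symm]
      smul_left := fun x y c => by
        show h.B y (c • x) = starRingEnd ℂ c * h.B y x
        rw [h.conj_symm, h.smul_left, _root_.map_mul, ← h.conj_symm] }
  letI : NormedAddCommGroup V := core.toNormedAddCommGroup
  letI : InnerProductSpace ℂ V := InnerProductSpace.ofCore core.toCore
  letI : NormedSpace ℂ V := inferInstance
  have hcont := LinearMap.continuous_of_finiteDimensional ψ
  let ψc : V →L[ℂ] ℂ := ⟨ψ, hcont⟩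
  refine ⟨‖ψc‖ ^ 2, by positivity, fun y => ?_⟩
  have h1 : ‖ψ y‖ ≤ ‖ψc‖ * ‖y‖ := ψc.le_opNorm y
  have h2 : RCLike.re (inner ℂ y y : ℂ) = ‖y‖ ^ 2 := inner_self_eq_norm_sq y
  have h3 : (h.B y y).re = ‖y‖ ^ 2 := h2
  rw [h3]
  have h4 : Complex.normSq (ψ y) = ‖ψ y‖ ^ 2 := by
    rw [← Complex.sq_norm]
  rw [h4]
  calc ‖ψ y‖ ^ 2 ≤ (‖ψc‖ * ‖y‖) ^ 2 := by
        apply pow_le_pow_left₀ (norm_nonneg _) h1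
    _ = ‖ψc‖ ^ 2 * ‖y‖ ^ 2 := by ring

lemma final_arith (ε δbar C s δ' a2 b2 t A P G : ℝ) (hεpos : 0 < ε) (hδbar : 0 < δbar)
    (hC0 : 0 ≤ C) (hspos : 0 < s) (hδ'1 : δ' ≤ δbar / 2) (hδ'2 : δ' ≤ ε / 2)
    (hsC : s * C ≤ δbar * ε) (hdq : G ≤ -δbar * a2) (ha2nn : 0 ≤ a2) (hb2nn : 0 ≤ b2)
    (ht : t ≤ A * P) (hA2 : A ^ 2 ≤ C * a2) (hP2 : P ^ 2 = b2)
    (hAnn : 0 ≤ A) (hPnn : 0 ≤ P) :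
    G + s * (-ε * b2 + t) ≤ -δ' * (a2 + s * b2) := by
  have hAP : 2 * ε * (A * P) ≤ C * a2 + ε ^ 2 * b2 := by
    nlinarith [sq_nonneg (A - ε * P)]
  have ht2 : 2 * ε * t ≤ C * a2 + ε ^ 2 * b2 := by
    have := mul_le_mul_of_nonneg_left ht (by positivity : (0:ℝ) ≤ 2 * ε)
    linarith
  have ht3 : 2 * ε * (s * t) ≤ s * C * a2 + s * ε ^ 2 * b2 := by
    have := mul_le_mul_of_nonneg_left ht2 hspos.le
    nlinarith
  have h4 : s * C * a2 ≤ δbar * ε * a2 := mul_le_mul_of_nonneg_right hsC ha2nn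
  have h5 : 2 * ε * (δ' * a2) ≤ ε * δbar * a2 := by nlinarith [mul_le_mul_of_nonneg_right hδ'1 (mul_nonneg hεpos.le ha2nn)]
  have h6 : 2 * ε * (δ' * (s * b2)) ≤ ε * ε * (s * b2) := by
    have hsb : 0 ≤ s * b2 := mul_nonneg hspos.le hb2nn
    nlinarith [mul_le_mul_of_nonneg_right hδ'2 hsb]
  have h7 : 2 * ε * G ≤ 2 * ε * (-δbar * a2) := by nlinarith
  nlinarith [hεpos]

lemma strict_lemma : ∀ (k : ℕ) (V : Type) [AddCommGroup V] [Module ℂ V]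
    [FiniteDimensional ℂ V], finrank ℂ V = k →
    ∀ f : V →ₗ[ℂ] V,
    (∀ (μ : ℂ) (v : V), v ≠ 0 → f v = μ • v → μ.re < 0) →
    ∃ (h : HermForm V) (δ : ℝ), 0 < δ ∧ h.IsPDF ∧
      ∀ x, (h.B (f x) x).re ≤ -δ * (h.B x x).re := by
  intro k
  induction k using Nat.strong_induction_on with
  | _ k IH =>
  intro V _ _ _ hk f hf
  rcases Nat.eq_zero_or_pos k with hk0 | hkpos
  · subst hk0
    haveI : Subsingleton V := Module.finrank_zero_iff.mp hk
    refine ⟨⟨fun _ _ => 0, by simp, by simp, by simp⟩, 1, one_pos, ?_, ?_⟩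
    · intro x hx; exact absurd (Subsingleton.elim x 0) hx
    · intro x; simp
  haveI : Nontrivial V := Module.nontrivial_of_finrank_pos (hk ▸ hkpos)
  obtain ⟨μ, hμ⟩ := Module.End.exists_eigenvalue f
  obtain ⟨v, hv⟩ := hμ.exists_hasEigenvector
  have hv0 : v ≠ 0 := hv.2
  have hfv : f v = μ • v := hv.apply_eq_smul
  have hμre : μ.re < 0 := hf μ v hv0 hfv
  set ε : ℝ := -μ.re with hε
  have hεpos : 0 < ε := by simp only [hε]; linarith
  set L : Submodule ℂ V := Submodule.span ℂ {v} with hL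
  have hvL : v ∈ L := Submodule.mem_span_singleton_self v
  have hLinv : L ≤ Submodule.comap f L := by
    intro x hx
    obtain ⟨c, rfl⟩ := Submodule.mem_span_singleton.mp hx
    simp only [Submodule.mem_comap, _root_.map_smul, hfv]
    exact Submodule.smul_mem _ _ (Submodule.smul_mem _ _ hvL)
  set g : (V ⧸ L) →ₗ[ℂ] (V ⧸ L) := L.mapQ L f hLinv with hg
  have hq : ∀ x : V, g (L.mkQ x) = L.mkQ (f x) := fun x => Submodule.mapQ_apply L L f x
  set m := finrank ℂ (V ⧸ L) with hmdef
  have hL1 : finrank ℂ L = 1 := finrank_span_singleton hv0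
  have hmk2 : m + 1 = k := by rw [hmdef, ← hL1, Submodule.finrank_quotient_add_finrank, hk]
  have hm : m < k := by omega
  -- eigenvalue hypothesis for the quotient map
  have hgf : ∀ (μ' : ℂ) (w : V ⧸ L), w ≠ 0 → g w = μ' • w → μ'.re < 0 := by
    intro μ' w hw0 hgw
    obtain ⟨x, rfl⟩ := L.mkQ_surjective w
    by_cases hcase : ∃ u : V, u ≠ 0 ∧ f u = μ' • u
    · obtain ⟨u, hu0, hu⟩ := hcase
      exact hf μ' u hu0 hu
    · push_neg at hcase
      exfalso
      have hTinj : ∀ u : V, f u = μ' • u → u = 0 := by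
        intro u hu
        by_contra h0
        exact hcase u h0 hu
      have hmem : f x - μ' • x ∈ L := by
        have h1 : L.mkQ (f x - μ' • x) = 0 := by
          rw [_root_.map_sub, _root_.map_smul, ← hq, hgw]
          simp
        rwa [Submodule.mkQ_apply, Submodule.Quotient.mk_eq_zero] at h1
      obtain ⟨c, hc⟩ := Submodule.mem_span_singleton.mp hmem
      have hμne : μ - μ' ≠ 0 := by
        intro he
        have heq : μ = μ' := by linear_combination he
        exact hcase v hv0 (heq ▸ hfv)
      set d : ℂ := c / (μ - μ') with hd
      have hdc : d * (μ - μ') = c := div_mul_cancel₀ c hμne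
      have hfx' : f (x - d • v) = μ' • (x - d • v) := by
        have hexp : f (x - d • v) - μ' • (x - d • v)
            = (f x - μ' • x) - (d * (μ - μ')) • v := by
          rw [_root_.map_sub, _root_.map_smul, hfv]
          module
        rw [hdc, ← hc, sub_self] at hexp
        exact sub_eq_zero.mp hexp
      have hx0 : x - d • v = 0 := hTinj _ hfx'
      have hxL : x ∈ L := by
        have : x = d • v := by
          have := sub_eq_zero.mp hx0; exact this
        rw [this]; exact Submodule.smul_mem _ _ hvL
      exact hw0 (by rw [Submodule.mkQ_apply, Submodule.Quotient.mk_eq_zero]; exact hxL)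
  obtain ⟨hbar, δbar, hδbar, hpdbar, hdiss⟩ := IH m hm (V ⧸ L) rfl g hgf
  -- the functional φ with φ v = 1
  obtain ⟨L', hL'⟩ := Submodule.exists_isCompl L
  set π : V →ₗ[ℂ] L := L.linearProjOfIsCompl L' hL' with hπ
  set e : ℂ ≃ₗ[ℂ] L := LinearEquiv.toSpanNonzeroSingleton ℂ V v hv0 with he
  set φ : V →ₗ[ℂ] ℂ := (e.symm : L →ₗ[ℂ] ℂ).comp π with hφ
  have hφv : φ v = 1 := by
    have h1 : π v = e 1 := by
      rw [LinearEquiv.toSpanNonzeroSingleton_one]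
      exact Submodule.linearProjOfIsCompl_apply_left hL' ⟨v, hvL⟩
    simp only [hφ, LinearMap.comp_apply, LinearEquiv.coe_coe, h1, LinearEquiv.symm_apply_apply]
  -- the section σ of mkQ with values in ker φ
  set N : Submodule ℂ V := LinearMap.ker φ with hN
  set eN : N →ₗ[ℂ] (V ⧸ L) := L.mkQ.comp N.subtype with heN
  have hinj : Function.Injective eN := by
    rw [← LinearMap.ker_eq_bot]
    rw [Submodule.eq_bot_iff]
    rintro ⟨n, hn⟩ hker
    have hnL : n ∈ L := by
      have : L.mkQ n = 0 := hker
      rwa [Submodule.mkQ_apply, Submodule.Quotient.mk_eq_zero] at this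
    obtain ⟨c, hc⟩ := Submodule.mem_span_singleton.mp hnL
    have hφn : φ n = 0 := hn
    rw [← hc, _root_.map_smul, hφv, smul_eq_mul, mul_one] at hφn
    have : n = 0 := by rw [← hc, hφn, zero_smul]
    simp [this]
  have hφsurj : Function.Surjective φ := by
    intro c
    exact ⟨c • v, by rw [_root_.map_smul, hφv, smul_eq_mul, mul_one]⟩
  have hrankN : finrank ℂ N = m := by
    have h1 : finrank ℂ (LinearMap.range φ) + finrank ℂ N = k := by
      rw [hN, LinearMap.finrank_range_add_finrank_ker, hk]
    have h2 : LinearMap.range φ = ⊤ := LinearMap.range_eq_top.mpr hφsurj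
    rw [h2, finrank_top] at h1
    have : finrank ℂ ℂ = 1 := Module.finrank_self ℂ
    omega
  have hsurj : Function.Surjective eN :=
    (LinearMap.injective_iff_surjective_of_finrank_eq_finrank (by rw [hrankN])).mp hinj
  set eqv : N ≃ₗ[ℂ] (V ⧸ L) := LinearEquiv.ofBijective eN ⟨hinj, hsurj⟩ with heqv
  set σ : (V ⧸ L) →ₗ[ℂ] V := N.subtype.comp (eqv.symm : (V ⧸ L) →ₗ[ℂ] N) with hσ
  have hφσ : ∀ y, φ (σ y) = 0 := fun y => (eqv.symm y).2
  have hkey : ∀ x : V, x = φ x • v + σ (L.mkQ x) := by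
    intro x
    set w : V := x - φ x • v with hw
    have hwN : w ∈ N := by
      have : φ w = 0 := by
        rw [hw, _root_.map_sub, _root_.map_smul, hφv, smul_eq_mul, mul_one, sub_self]
      exact this
    have hmkw : L.mkQ w = L.mkQ x := by
      rw [hw, _root_.map_sub, _root_.map_smul]
      have : L.mkQ v = 0 := by rw [Submodule.mkQ_apply, Submodule.Quotient.mk_eq_zero]; exact hvL
      rw [this, smul_zero, sub_zero]
    have heqvw : eqv ⟨w, hwN⟩ = L.mkQ x := by
      show eN ⟨w, hwN⟩ = L.mkQ x
      simpa [heN] using hmkw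
    have hσw : σ (L.mkQ x) = w := by
      rw [hσ]
      simp only [LinearMap.comp_apply, LinearEquiv.coe_coe]
      rw [← heqvw, LinearEquiv.symm_apply_apply]
      rfl
    rw [hσw, hw]
    abel
  -- the bound on η
  set η : (V ⧸ L) →ₗ[ℂ] ℂ := φ.comp (f.comp σ) with hη
  obtain ⟨C, hC0, hCb⟩ := riesz_bound hbar hpdbar η
  set s : ℝ := δbar * ε / (C + 1) with hs
  have hspos : 0 < s := by
    apply div_pos (mul_pos hδbar hεpos); linarith
  -- the form
  classical
  let BB : V → V → ℂ := fun x y =>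
    hbar.B (L.mkQ x) (L.mkQ y) + (s : ℂ) * (φ x * starRingEnd ℂ (φ y))
  have hBBapp : ∀ x y, BB x y
      = hbar.B (L.mkQ x) (L.mkQ y) + (s : ℂ) * (φ x * starRingEnd ℂ (φ y)) :=
    fun _ _ => rfl
  have hadd : ∀ x y z, BB (x + y) z = BB x z + BB y z := by
    intro x y z
    rw [hBBapp, hBBapp, hBBapp, _root_.map_add, hbar.add_left, _root_.map_add]
    ring
  have hsmul : ∀ (c : ℂ) (x y : V), BB (c • x) y = c * BB x y := by
    intro c x y
    rw [hBBapp, hBBapp, _root_.map_smul, _root_.map_smul, hbar.smul_left, smul_eq_mul]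
    ring
  have hconj : ∀ x y, BB y x = starRingEnd ℂ (BB x y) := by
    intro x y
    rw [hBBapp, hBBapp, _root_.map_add, _root_.map_mul, _root_.map_mul,
      hbar.conj_symm (L.mkQ x) (L.mkQ y), Complex.conj_ofReal, Complex.conj_conj]
    ring
  have hdiag : ∀ x : V, (BB x x).re
      = (hbar.B (L.mkQ x) (L.mkQ x)).re + s * Complex.normSq (φ x) := by
    intro x
    rw [hBBapp, Complex.mul_conj (φ x),
      show ((s:ℂ) * (Complex.normSq (φ x) : ℂ)) = ((s * Complex.normSq (φ x) : ℝ) : ℂ) by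
        push_cast; ring,
      Complex.add_re, Complex.ofReal_re]
  set δ' : ℝ := min (δbar / 2) (ε / 2) with hδ'
  have hδ'pos : 0 < δ' := lt_min (by linarith) (by linarith)
  refine ⟨⟨BB, hadd, hsmul, hconj⟩, δ', hδ'pos, ?_, ?_⟩
  · intro x hx0
    show 0 < (BB x x).re
    rw [hdiag]
    by_cases hqx : L.mkQ x = 0
    · have hx : x = φ x • v := by
        have hkx := hkey x
        rw [hqx, _root_.map_zero, add_zero] at hkx
        exact hkx
      have hφx : φ x ≠ 0 := by
        intro hz
        rw [hz, zero_smul] at hx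
        exact hx0 hx
      have h1 : 0 ≤ (hbar.B (L.mkQ x) (L.mkQ x)).re := hpdbar.nonneg _
      have h2 : 0 < Complex.normSq (φ x) := Complex.normSq_pos.mpr hφx
      have h3 := mul_pos hspos h2
      linarith
    · have h1 : 0 < (hbar.B (L.mkQ x) (L.mkQ x)).re := hpdbar _ hqx
      have h2 : 0 ≤ Complex.normSq (φ x) := Complex.normSq_nonneg _
      have h3 := mul_nonneg hspos.le h2
      linarith
  · intro x
    show (BB (f x) x).re ≤ -δ' * (BB x x).re
    set qx := L.mkQ x with hqxdef
    set p : ℂ := φ x with hp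
    set u : ℂ := η qx with hu
    have hφfx : φ (f x) = μ * p + u := by
      have h1 : f x = p • (μ • v) + f (σ qx) := by
        conv_lhs => rw [hkey x]
        rw [_root_.map_add, _root_.map_smul, hfv]
      have h2 : φ (p • μ • v) = μ * p := by
        rw [_root_.map_smul, _root_.map_smul, hφv]
        simp [smul_eq_mul]
        ring
      have h3 : φ (f (σ qx)) = u := rfl
      rw [h1, _root_.map_add, h2, h3]
    have hmkfx : L.mkQ (f x) = g qx := (hq x).symm
    set t : ℝ := (u * starRingEnd ℂ p).re with htdef
    set b2 : ℝ := Complex.normSq p with hb2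
    have hlhs : (BB (f x) x).re
        = (hbar.B (g qx) qx).re + s * (μ.re * b2 + t) := by
      rw [hBBapp, hmkfx, hφfx]
      have hexp : ((μ * p + u) * starRingEnd ℂ p)
          = μ * (Complex.normSq p : ℂ) + u * starRingEnd ℂ p := by
        rw [← Complex.mul_conj p]; ring
      rw [Complex.add_re, ← hp, hexp]
      rw [Complex.re_ofReal_mul, Complex.add_re, Complex.mul_re, Complex.ofReal_re,
        Complex.ofReal_im]
      rw [← hqxdef, ← hb2, ← htdef]
      ring_nf
    rw [hlhs, hdiag, ← hqxdef, ← hp, ← hb2]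
    set a2 : ℝ := (hbar.B qx qx).re with ha2
    set G : ℝ := (hbar.B (g qx) qx).re with hG
    have hdq : G ≤ -δbar * a2 := hdiss qx
    have ha2nn : 0 ≤ a2 := hpdbar.nonneg qx
    have hb2nn : 0 ≤ b2 := Complex.normSq_nonneg p
    set A : ℝ := ‖u‖ with hA
    set P : ℝ := ‖p‖ with hP
    have ht : t ≤ A * P := by
      calc t ≤ ‖u * starRingEnd ℂ p‖ := Complex.re_le_norm _
        _ = A * P := by rw [norm_mul, Complex.norm_conj]
    have hA2 : A ^ 2 ≤ C * a2 := by
      rw [hA, Complex.sq_norm u]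
      exact hCb qx
    have hP2 : P ^ 2 = b2 := by rw [hP, Complex.sq_norm p]
    have hAnn : 0 ≤ A := norm_nonneg u
    have hPnn : 0 ≤ P := norm_nonneg p
    have hsC : s * C ≤ δbar * ε := by
      have hs_eq : s * (C + 1) = δbar * ε := by
        rw [hs]; field_simp
      nlinarith
    have hδ'1 : δ' ≤ δbar / 2 := min_le_left _ _
    have hδ'2 : δ' ≤ ε / 2 := min_le_right _ _
    have hμre' : μ.re = -ε := by rw [hε]; ring
    rw [hμre']
    clear_value A P t a2 b2 G s δ' qx p u
    exact final_arith ε δbar C s δ' a2 b2 t A P G hεpos hδbar hC0 hspos hδ'1 hδ'2 hsC hdq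
      ha2nn hb2nn ht hA2 hP2 hAnn hPnn

lemma main_lemma : ∀ (k : ℕ) (V : Type) [AddCommGroup V] [Module ℂ V]
    [FiniteDimensional ℂ V], finrank ℂ V = k →
    ∀ f : V →ₗ[ℂ] V,
    (∀ (μ : ℂ) (v : V), v ≠ 0 → f v = μ • v → μ.re ≤ 0) →
    (∀ μ : ℂ, μ.re = 0 → ∀ x : V,
      f (f x - μ • x) - μ • (f x - μ • x) = 0 → f x - μ • x = 0) →
    ∃ h : HermForm V, h.IsPDF ∧ ∀ x, (h.B (f x) x).re ≤ 0 := by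
  intro k
  induction k using Nat.strong_induction_on with
  | _ k IH =>
  intro V _ _ _ hk f hyp1 hyp2
  by_cases himag : ∃ (μ : ℂ) (v : V), v ≠ 0 ∧ f v = μ • v ∧ μ.re = 0
  · obtain ⟨μ, v, hv0, hfv, hμ0⟩ := himag
    set g : V →ₗ[ℂ] V := f - μ • LinearMap.id with hgdef
    have hgapp : ∀ x : V, g x = f x - μ • x := by
      intro x
      simp [hgdef]
    set K : Submodule ℂ V := LinearMap.ker g with hK
    set W : Submodule ℂ V := LinearMap.range g with hW
    have hgg : ∀ x : V, g (f x) = f (g x) := by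
      intro x
      simp only [hgapp, _root_.map_sub, _root_.map_smul]
    have hdisj : Disjoint K W := by
      rw [Submodule.disjoint_def]
      intro u huK huW
      obtain ⟨y, hy⟩ := huW
      have hgu : g u = 0 := huK
      have hpre : f (f y - μ • y) - μ • (f y - μ • y) = 0 := by
        rw [← hgapp, ← hgapp, hy, hgu]
      have := hyp2 μ hμ0 y hpre
      rw [← hgapp, hy] at this
      exact this
    have hranknull : finrank ℂ W + finrank ℂ K = k := by
      rw [hW, hK, LinearMap.finrank_range_add_finrank_ker, hk]
    have hsup : K ⊔ W = ⊤ := by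
      apply Submodule.eq_top_of_finrank_eq
      have h1 := Submodule.finrank_sup_add_finrank_inf_eq K W
      rw [disjoint_iff.mp hdisj] at h1
      simp only [finrank_bot, add_zero] at h1
      omega
    have hcompl : IsCompl K W := ⟨hdisj, codisjoint_iff.mpr hsup⟩
    have hKinv : ∀ x ∈ K, f x ∈ K := by
      intro x hx
      have : g x = 0 := hx
      show g (f x) = 0
      rw [hgg, this, _root_.map_zero]
    have hWinv : ∀ x ∈ W, f x ∈ W := by
      intro x hx
      obtain ⟨y, hy⟩ := hx
      exact ⟨f y, by rw [hgg, hy]⟩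
    set fK : K →ₗ[ℂ] K := f.restrict hKinv with hfK
    set fW : W →ₗ[ℂ] W := f.restrict hWinv with hfW
    have hvK : v ∈ K := by
      show g v = 0
      rw [hgapp, hfv, sub_self]
    haveI : Nontrivial K :=
      ⟨⟨v, hvK⟩, 0, fun hEq => hv0 (by simpa using congrArg Subtype.val hEq)⟩
    have hKpos : 0 < finrank ℂ K := finrank_pos
    have hWlt : finrank ℂ W < k := by omega
    -- hypotheses for the restriction to W
    have hyp1W : ∀ (μ' : ℂ) (u : W), u ≠ 0 → fW u = μ' • u → μ'.re ≤ 0 := by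
      intro μ' u hu0 hequ
      have hcoe : f ↑u = μ' • (↑u : V) := by
        have := congrArg (Subtype.val) hequ
        rw [LinearMap.restrict_coe_apply] at this
        simpa using this
      exact hyp1 μ' ↑u (fun hz => hu0 (by exact_mod_cast Subtype.ext hz)) hcoe
    have hyp2W : ∀ μ' : ℂ, μ'.re = 0 → ∀ x : W,
        fW (fW x - μ' • x) - μ' • (fW x - μ' • x) = 0 → fW x - μ' • x = 0 := by
      intro μ' hμ' x hpre
      have hcoe : f (f ↑x - μ' • ↑x) - μ' • (f ↑x - μ' • (↑x : V)) = 0 := by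
        have h0 := congrArg (Subtype.val) hpre
        simp only [hfW, AddSubgroupClass.coe_sub, SetLike.val_smul,
          LinearMap.restrict_coe_apply, ZeroMemClass.coe_zero] at h0
        exact h0
      have h2' := hyp2 μ' hμ' ↑x hcoe
      apply Subtype.ext
      simp only [hfW, AddSubgroupClass.coe_sub, SetLike.val_smul,
        LinearMap.restrict_coe_apply, ZeroMemClass.coe_zero]
      exact h2'
    obtain ⟨h2, hpd2, hdiss2⟩ := IH (finrank ℂ W) hWlt W rfl fW hyp1W hyp2W
    obtain ⟨h1, hpd1⟩ := exists_pdf K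
    set pK : V →ₗ[ℂ] K := K.linearProjOfIsCompl W hcompl with hpK
    set pW : V →ₗ[ℂ] W := W.linearProjOfIsCompl K hcompl.symm with hpW
    have hdecomp : ∀ x : V, ↑(pK x) + ↑(pW x) = x :=
      Submodule.projection_add_projection_eq_self hcompl
    have hpKl : ∀ u : K, pK ↑u = u := fun u => Submodule.linearProjOfIsCompl_apply_left hcompl u
    have hpKr : ∀ w : W, pK ↑w = 0 := fun w => Submodule.linearProjOfIsCompl_apply_right hcompl w
    have hpWl : ∀ w : W, pW ↑w = w :=
      fun w => Submodule.linearProjOfIsCompl_apply_left hcompl.symm w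
    have hpWr : ∀ u : K, pW ↑u = 0 :=
      fun u => Submodule.linearProjOfIsCompl_apply_right hcompl.symm u
    let BB : V → V → ℂ := fun x y => h1.B (pK x) (pK y) + h2.B (pW x) (pW y)
    have hBBapp : ∀ x y, BB x y = h1.B (pK x) (pK y) + h2.B (pW x) (pW y) := fun _ _ => rfl
    have hadd : ∀ x y z, BB (x + y) z = BB x z + BB y z := by
      intro x y z
      rw [hBBapp, hBBapp, hBBapp, _root_.map_add, _root_.map_add, h1.add_left, h2.add_left]
      ring
    have hsmul : ∀ (c : ℂ) (x y : V), BB (c • x) y = c * BB x y := by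
      intro c x y
      rw [hBBapp, hBBapp, _root_.map_smul, _root_.map_smul, h1.smul_left, h2.smul_left]
      ring
    have hconj : ∀ x y, BB y x = starRingEnd ℂ (BB x y) := by
      intro x y
      rw [hBBapp, hBBapp, _root_.map_add, h1.conj_symm (pK x) (pK y), h2.conj_symm (pW x) (pW y)]
    -- projections commute with f
    have hfdec : ∀ x : V, f x = ↑(fK (pK x)) + ↑(fW (pW x)) := by
      intro x
      simp only [hfK, hfW, LinearMap.restrict_coe_apply]
      conv_lhs => rw [← hdecomp x]
      rw [_root_.map_add]
    have hpKf : ∀ x : V, pK (f x) = fK (pK x) := by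
      intro x
      rw [hfdec x, _root_.map_add, hpKl, hpKr, add_zero]
    have hpWf : ∀ x : V, pW (f x) = fW (pW x) := by
      intro x
      rw [hfdec x, _root_.map_add, hpWl, hpWr, zero_add]
    -- fK is multiplication by μ
    have hfKmu : ∀ u : K, fK u = μ • u := by
      intro u
      apply Subtype.ext
      simp only [hfK, LinearMap.restrict_coe_apply, SetLike.val_smul]
      have hgu : g ↑u = 0 := u.2
      rw [hgapp] at hgu
      exact sub_eq_zero.mp hgu
    refine ⟨⟨BB, hadd, hsmul, hconj⟩, ?_, ?_⟩
    · intro x hx0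
      show 0 < (BB x x).re
      rw [hBBapp, Complex.add_re]
      have hnn1 : 0 ≤ (h1.B (pK x) (pK x)).re := hpd1.nonneg _
      have hnn2 : 0 ≤ (h2.B (pW x) (pW x)).re := hpd2.nonneg _
      by_cases hKx : pK x = 0
      · have hWx : pW x ≠ 0 := by
          intro hz
          apply hx0
          rw [← hdecomp x, hKx, hz]
          simp
        have := hpd2 _ hWx
        linarith
      · have := hpd1 _ hKx
        linarith
    · intro x
      show (BB (f x) x).re ≤ 0
      rw [hBBapp, Complex.add_re, hpKf, hpWf]
      have hterm2 : (h2.B (fW (pW x)) (pW x)).re ≤ 0 := hdiss2 (pW x)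
      have hterm1 : (h1.B (fK (pK x)) (pK x)).re = 0 := by
        rw [hfKmu, h1.smul_left, Complex.mul_re, hμ0, h1.im_diag, zero_mul, mul_zero,
          sub_zero]
      linarith
  · -- no purely imaginary eigenvalues: strictly stable
    push_neg at himag
    have hstrict : ∀ (μ : ℂ) (v : V), v ≠ 0 → f v = μ • v → μ.re < 0 := by
      intro μ v hv0 hfv
      have h1 := hyp1 μ v hv0 hfv
      have h2 := himag μ v hv0 hfv
      exact lt_of_le_of_ne h1 h2
    obtain ⟨h, δ, hδ, hpd, hdiss⟩ := strict_lemma k V hk f hstrict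
    refine ⟨h, hpd, fun x => ?_⟩
    have h1 := hdiss x
    have h2 : 0 ≤ (h.B x x).re := hpd.nonneg x
    nlinarith

/-- Lyapunov: every stable real matrix `S` admits `P ≻ 0` with `P S + Sᵀ P ⪯ 0`
(expressed via the quadratic form). -/
lemma exists_lyapunov {n : ℕ} (S : Matrix (Fin n) (Fin n) ℝ) (hS : S.IsStable) :
    ∃ P : Matrix (Fin n) (Fin n) ℝ, P.PosDef ∧ Pᵀ = P ∧
      ∀ x : Fin n → ℝ, x ⬝ᵥ ((P * S) *ᵥ x) ≤ 0 := by
  classical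
  set Sc : Matrix (Fin n) (Fin n) ℂ := S.map Complex.ofReal with hSc
  set f : (Fin n → ℂ) →ₗ[ℂ] (Fin n → ℂ) := Sc.mulVecLin with hf
  have hfapp : ∀ v, f v = Sc *ᵥ v := fun v => rfl
  have htr : ∀ (μ : ℂ) (y : Fin n → ℂ), (Sc - μ • 1) *ᵥ y = f y - μ • y := by
    intro μ y
    rw [Matrix.sub_mulVec, Matrix.smul_mulVec, Matrix.one_mulVec, hfapp]
  have hyp1 : ∀ (μ : ℂ) (v : Fin n → ℂ), v ≠ 0 → f v = μ • v → μ.re ≤ 0 := by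
    intro μ v hv0 heig
    have hdet : (Sc - μ • 1).det = 0 := by
      rw [← Matrix.exists_mulVec_eq_zero_iff]
      exact ⟨v, hv0, by rw [htr, heig, sub_self]⟩
    exact (hS μ hdet).1
  have hyp2 : ∀ μ : ℂ, μ.re = 0 → ∀ x : Fin n → ℂ,
      f (f x - μ • x) - μ • (f x - μ • x) = 0 → f x - μ • x = 0 := by
    intro μ hμ0 x hpre
    have hpre' : (Sc - μ • 1) *ᵥ ((Sc - μ • 1) *ᵥ x) = 0 := by
      rw [htr, htr]; exact hpre
    by_cases hdet : (Sc - μ • 1).det = 0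
    · have := (hS μ hdet).2 hμ0 x (by rwa [← Matrix.mulVec_mulVec])
      rwa [htr] at this
    · by_cases hy : (Sc - μ • 1) *ᵥ x = 0
      · rwa [htr] at hy
      · exfalso
        exact hdet (Matrix.exists_mulVec_eq_zero_iff.mp ⟨_, hy, hpre'⟩)
  obtain ⟨h, hpd, hdiss⟩ :=
    main_lemma (finrank ℂ (Fin n → ℂ)) (Fin n → ℂ) rfl f hyp1 hyp2
  -- matrix of the form
  set H : Matrix (Fin n) (Fin n) ℂ :=
    Matrix.of (fun i j => h.B (Pi.single j 1) (Pi.single i 1)) with hH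
  have hHapp : ∀ i j, H i j = h.B (Pi.single j 1) (Pi.single i 1) := fun _ _ => rfl
  have hxsum : ∀ x : Fin n → ℂ, x = ∑ j, x j • (Pi.single j 1 : Fin n → ℂ) := by
    intro x
    ext i
    rw [Finset.sum_apply]
    simp [Pi.single_apply]
  have hrep : ∀ x y : Fin n → ℂ, h.B x y = star y ⬝ᵥ H *ᵥ x := by
    intro x y
    have hx : h.B x y = ∑ j, x j * h.B (Pi.single j 1) y := by
      conv_lhs => rw [hxsum x]
      rw [h.sum_left]
      congr 1; ext j
      rw [h.smul_left]
    have hy : ∀ j, h.B (Pi.single j 1) y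
        = ∑ i, starRingEnd ℂ (y i) * H i j := by
      intro j
      rw [h.conj_symm]
      conv_lhs => rw [hxsum y]
      rw [h.sum_left, _root_.map_sum]
      congr 1; ext i
      rw [h.smul_left, _root_.map_mul, ← h.conj_symm, hHapp]
    rw [hx]
    simp only [hy, Finset.mul_sum]
    rw [Finset.sum_comm]
    apply Finset.sum_congr rfl
    intro i _
    simp only [Matrix.mulVec, dotProduct, Pi.star_apply, RCLike.star_def, Finset.mul_sum]
    apply Finset.sum_congr rfl
    intro j _
    ring
  -- the real matrix P
  set P : Matrix (Fin n) (Fin n) ℝ := Matrix.of (fun i j => (H i j).re) with hPdef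
  have hPapp : ∀ i j, P i j = (H i j).re := fun _ _ => rfl
  have hHherm : ∀ i j, H j i = starRingEnd ℂ (H i j) := by
    intro i j
    rw [hHapp, hHapp, h.conj_symm]
  have hPsym : Pᵀ = P := by
    ext i j
    rw [Matrix.transpose_apply, hPapp, hPapp, hHherm i j, Complex.conj_re]
  set cx : (Fin n → ℝ) → (Fin n → ℂ) := fun x i => ((x i : ℝ) : ℂ) with hcx
  have hbridge : ∀ x y : Fin n → ℝ, (star (cx y) ⬝ᵥ H *ᵥ (cx x)).re = y ⬝ᵥ P *ᵥ x := by
    intro x y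
    rw [dotProduct, dotProduct, Complex.re_sum]
    apply Finset.sum_congr rfl
    intro i _
    have h1 : star (cx y) i = ((y i : ℝ) : ℂ) := by
      simp [hcx, Pi.star_apply, RCLike.star_def, Complex.conj_ofReal]
    rw [h1, Complex.re_ofReal_mul]
    congr 1
    rw [Matrix.mulVec, Matrix.mulVec, dotProduct, dotProduct, Complex.re_sum]
    apply Finset.sum_congr rfl
    intro j _
    rw [show (cx x j) = ((x j : ℝ) : ℂ) from rfl, mul_comm, Complex.re_ofReal_mul, hPapp]
    ring
  have hmap : ∀ x : Fin n → ℝ, Sc *ᵥ (cx x) = cx (S *ᵥ x) := by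
    intro x
    ext i
    show (∑ j, Sc i j * cx x j) = ((∑ j, S i j * x j : ℝ) : ℂ)
    push_cast
    apply Finset.sum_congr rfl
    intro j _
    rw [show Sc i j = ((S i j : ℝ) : ℂ) from rfl, show (cx x j) = ((x j : ℝ) : ℂ) from rfl]
  have hcx0 : ∀ x : Fin n → ℝ, x ≠ 0 → cx x ≠ 0 := by
    intro x hx hz
    apply hx
    funext i
    have h0 := congrFun hz i
    have h1 : ((x i : ℝ) : ℂ) = 0 := h0
    exact_mod_cast h1
  have hposdef : P.PosDef := by
    refine Matrix.PosDef.of_dotProduct_mulVec_pos ?_ ?_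
    · ext i j
      rw [Matrix.conjTranspose_apply, star_trivial]
      exact congrFun (congrFun hPsym i) j
    · intro x hx
      have hpos := hpd (cx x) (hcx0 x hx)
      rw [hrep] at hpos
      rw [hbridge x x] at hpos
      rw [star_trivial]
      exact hpos
  refine ⟨P, hposdef, hPsym, ?_⟩
  intro x
  have hd := hdiss (cx x)
  rw [hfapp, hmap, hrep, hbridge] at hd
  rw [← Matrix.mulVec_mulVec]
  exact hd


end DHDevelopment

/-- every stabilizing static-state feedback arises from the DH
parametrization. -/
theorem stabilizing_feedback_dh_form {n m : ℕ} (A : Matrix (Fin n) (Fin n) ℝ)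
    (B : Matrix (Fin n) (Fin m) ℝ) (Bd : Matrix (Fin m) (Fin n) ℝ)
    (hBd : IsMoorePenrose B Bd)
    (K : Matrix (Fin m) (Fin n) ℝ) (hK : (A - B * K).IsStable) :
    ∃ (J R Q : Matrix (Fin n) (Fin n) ℝ) (Y : Matrix (Fin m) (Fin n) ℝ),
      Jᵀ = -J ∧ R.PosSemidef ∧ Q.PosDef ∧
      (1 - B * Bd) * (A - (J - R) * Q) = 0 ∧
      K = Bd * (A - (J - R) * Q) - (1 - Bd * B) * Y := by
  classical
  set S : Matrix (Fin n) (Fin n) ℝ := A - B * K with hSdef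
  obtain ⟨P, hP, hPsym, hLyap⟩ := exists_lyapunov S hK
  have hdet : IsUnit P.det := isUnit_iff_ne_zero.mpr hP.det_pos.ne'
  set Pi : Matrix (Fin n) (Fin n) ℝ := P⁻¹ with hPidef
  have hPiP : Pi * P = 1 := Matrix.nonsing_inv_mul P hdet
  have hPPi : P * Pi = 1 := Matrix.mul_nonsing_inv P hdet
  have hPisym : Piᵀ = Pi := by
    rw [hPidef, Matrix.transpose_nonsing_inv, hPsym]
  set J : Matrix (Fin n) (Fin n) ℝ := (1/2 : ℝ) • (S * Pi - Pi * Sᵀ) with hJdef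
  set R : Matrix (Fin n) (Fin n) ℝ := -((1/2 : ℝ) • (S * Pi + Pi * Sᵀ)) with hRdef
  set W : Matrix (Fin n) (Fin n) ℝ := -((1/2 : ℝ) • (P * S + Sᵀ * P)) with hWdef
  -- symmetry of W
  have hWsym : Wᵀ = W := by
    rw [hWdef, Matrix.transpose_neg, Matrix.transpose_smul, Matrix.transpose_add,
      Matrix.transpose_mul, Matrix.transpose_mul, Matrix.transpose_transpose, hPsym,
      add_comm]
  have hWherm : W.IsHermitian := by
    ext i j
    rw [Matrix.conjTranspose_apply, star_trivial]
    exact congrFun (congrFun hWsym i) j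
  -- quadratic form identity
  have hid : ∀ x : Fin n → ℝ, x ⬝ᵥ ((Sᵀ * P) *ᵥ x) = x ⬝ᵥ ((P * S) *ᵥ x) := by
    intro x
    rw [← Matrix.mulVec_mulVec, ← Matrix.mulVec_mulVec,
      Matrix.dotProduct_mulVec x Sᵀ, Matrix.vecMul_transpose,
      Matrix.dotProduct_mulVec x P]
    have hvm : x ᵥ* P = P *ᵥ x := by
      conv_lhs => rw [← hPsym]
      rw [Matrix.vecMul_transpose]
    rw [hvm]
    exact dotProduct_comm _ _
  have hWpsd : W.PosSemidef := by
    refine Matrix.PosSemidef.of_dotProduct_mulVec_nonneg hWherm (fun x => ?_)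
    rw [star_trivial]
    have he : x ⬝ᵥ W *ᵥ x
        = -((1/2 : ℝ) * (x ⬝ᵥ ((P * S) *ᵥ x) + x ⬝ᵥ ((Sᵀ * P) *ᵥ x))) := by
      rw [hWdef, Matrix.neg_mulVec, dotProduct_neg, Matrix.smul_mulVec,
        dotProduct_smul, Matrix.add_mulVec, dotProduct_add, smul_eq_mul]
    rw [he, hid x]
    have := hLyap x
    linarith
  have hRW : R = Pi * W * Pi := by
    rw [hRdef, hWdef]
    have h1 : Pi * -((1/2 : ℝ) • (P * S + Sᵀ * P)) * Pi
        = -((1/2 : ℝ) • (Pi * (P * S + Sᵀ * P) * Pi)) := by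
      rw [Matrix.mul_neg, Matrix.neg_mul, Matrix.mul_smul, Matrix.smul_mul]
    rw [h1]
    have h2 : Pi * (P * S + Sᵀ * P) * Pi = S * Pi + Pi * Sᵀ := by
      calc Pi * (P * S + Sᵀ * P) * Pi
          = (Pi * P) * (S * Pi) + Pi * Sᵀ * (P * Pi) := by noncomm_ring
        _ = S * Pi + Pi * Sᵀ := by rw [hPiP, hPPi, one_mul, Matrix.mul_one]
    rw [h2]
  have hRpsd : R.PosSemidef := by
    rw [hRW]
    have hPiH : Piᴴ = Pi := by
      ext i j
      rw [Matrix.conjTranspose_apply, star_trivial]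
      exact congrFun (congrFun hPisym i) j
    have := hWpsd.mul_mul_conjTranspose_same Pi
    rwa [hPiH] at this
  have hJskew : Jᵀ = -J := by
    rw [hJdef, Matrix.transpose_smul, Matrix.transpose_sub, Matrix.transpose_mul,
      Matrix.transpose_mul, Matrix.transpose_transpose, hPisym, ← smul_neg, neg_sub]
  have hJRQ : (J - R) * P = S := by
    have h1 : J - R = S * Pi := by
      rw [hJdef, hRdef, sub_neg_eq_add, ← smul_add]
      have h2 : (S * Pi - Pi * Sᵀ) + (S * Pi + Pi * Sᵀ) = (2 : ℝ) • (S * Pi) := by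
        rw [two_smul]; abel
      rw [h2, smul_smul]
      norm_num
    rw [h1, Matrix.mul_assoc, hPiP, Matrix.mul_one]
  have hAJR : A - (J - R) * P = B * K := by
    rw [hJRQ, hSdef]
    abel
  refine ⟨J, R, P, -K, hJskew, hRpsd, hP, ?_, ?_⟩
  · rw [hAJR]
    have h1 : B * Bd * B = B := hBd.1
    rw [Matrix.sub_mul, Matrix.one_mul, ← Matrix.mul_assoc, h1, sub_self]
  · rw [hAJR]
    have h3 : (1 - Bd * B) * (-K) = -K + Bd * B * K := by
      rw [Matrix.sub_mul, Matrix.one_mul, Matrix.mul_neg, sub_neg_eq_add]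
    rw [h3, ← Matrix.mul_assoc]
    abel
end
end

section
/- Let A ∈ ℝⁿˣⁿ, B ∈ ℝⁿˣᵐ with rank(B) = k, and let U be orthogonal with Uᵀ B B† U = diag(I_k, 0). Write Uᵀ A U in blocks with Â₂₂ ∈ ℝ^{(n−k)×(n−k)} the bottom-right block. If Â₂₂ is stable, then there exists K ∈ ℝᵐˣⁿ such that A − BK is stable. -/
open Matrix

noncomputable section

lemma mapC_mul {n m p : Type*} [Fintype m] (X : Matrix n m ℝ) (Y : Matrix m p ℝ) :
    (X * Y).map Complex.ofReal = X.map Complex.ofReal * Y.map Complex.ofReal :=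
  Matrix.map_mul (f := Complex.ofRealHom)

lemma mapC_one {n : Type*} [Fintype n] [DecidableEq n] :
    (1 : Matrix n n ℝ).map Complex.ofReal = 1 :=
  Matrix.map_one _ Complex.ofReal_zero Complex.ofReal_one

lemma stable_conj {n : Type*} [Fintype n] [DecidableEq n]
    (M U : Matrix n n ℝ) (hU : Uᵀ * U = 1) (hUU : U * Uᵀ = 1)
    (hM : M.IsStable) : (U * M * Uᵀ).IsStable := by
  set Uc := U.map Complex.ofReal with hUc
  set Mc := M.map Complex.ofReal with hMc
  have hUtc : (Uᵀ).map Complex.ofReal = Ucᵀ := rfl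
  have hUcU : Ucᵀ * Uc = 1 := by
    rw [← hUtc, ← mapC_mul, hU, mapC_one]
  have hUUc : Uc * Ucᵀ = 1 := by
    rw [← hUtc, ← mapC_mul, hUU, mapC_one]
  intro μ hdet
  have key : (U * M * Uᵀ).map Complex.ofReal - μ • 1 = Uc * (Mc - μ • 1) * Ucᵀ := by
    rw [mapC_mul, mapC_mul, hUtc]
    rw [Matrix.mul_sub, Matrix.sub_mul]
    congr 1
    rw [Matrix.mul_smul, Matrix.smul_mul, Matrix.mul_one, hUUc]
  rw [key] at hdet
  have hdet' : (Mc - μ • 1).det = 0 := by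
    have h1 : Uc.det * Ucᵀ.det = 1 := by rw [← det_mul, hUUc, det_one]
    rw [det_mul, det_mul] at hdet
    linear_combination hdet - (Mc - μ • 1).det * h1
  obtain ⟨hre, hsemi⟩ := hM μ hdet'
  refine ⟨hre, fun h0 v hv2 => ?_⟩
  rw [key] at hv2 ⊢
  have hc : ∀ X : Matrix n n ℂ, Ucᵀ * (Uc * X) = X := fun X => by
    rw [← Matrix.mul_assoc, hUcU, Matrix.one_mul]
  have hv2' : (Uc * ((Mc - μ • 1) * (Mc - μ • 1)) * Ucᵀ).mulVec v = 0 := by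
    rw [show Uc * ((Mc - μ • 1) * (Mc - μ • 1)) * Ucᵀ
        = Uc * (Mc - μ • 1) * Ucᵀ * (Uc * (Mc - μ • 1) * Ucᵀ) from by
      simp only [Matrix.mul_assoc, hc]]
    exact hv2
  have cancel : ∀ w : n → ℂ, Uc.mulVec w = 0 → w = 0 := by
    intro w hw
    have := congrArg (Ucᵀ.mulVec) hw
    rwa [Matrix.mulVec_mulVec, hUcU, Matrix.one_mulVec, Matrix.mulVec_zero] at this
  have h1 : ((Mc - μ • 1) * (Mc - μ • 1)).mulVec (Ucᵀ.mulVec v) = 0 := by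
    apply cancel
    rw [Matrix.mulVec_mulVec, Matrix.mulVec_mulVec]
    exact hv2'
  have h2 : (Mc - μ • 1).mulVec (Ucᵀ.mulVec v) = 0 := hsemi h0 _ h1
  rw [← Matrix.mulVec_mulVec, ← Matrix.mulVec_mulVec, h2, Matrix.mulVec_zero]

lemma stable_block {k l : ℕ} (C : Matrix (Fin l) (Fin k) ℝ) (D : Matrix (Fin l) (Fin l) ℝ)
    (hD : D.IsStable) : (Matrix.fromBlocks (-1) 0 C D).IsStable := by
  set Cc := C.map Complex.ofReal with hCc
  set Dc := D.map Complex.ofReal with hDc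
  intro μ hdet
  have hmap : (Matrix.fromBlocks (-1) 0 C D).map Complex.ofReal
      = Matrix.fromBlocks (-1 : Matrix (Fin k) (Fin k) ℂ) 0 Cc Dc := by
    have m1 : ((-1 : Matrix (Fin k) (Fin k) ℝ)).map Complex.ofReal = -1 := by
      ext i j
      simp [Matrix.one_apply, apply_ite]
    have m0 : ((0 : Matrix (Fin k) (Fin l) ℝ)).map Complex.ofReal = 0 := by
      ext i j; simp
    rw [Matrix.fromBlocks_map, m1, m0]
  have key : (Matrix.fromBlocks (-1) 0 C D).map Complex.ofReal - μ • 1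
      = Matrix.fromBlocks ((-(1 + μ)) • (1 : Matrix (Fin k) (Fin k) ℂ)) 0 Cc (Dc - μ • 1) := by
    rw [hmap]
    ext i j
    cases i <;> cases j <;>
      simp [Matrix.fromBlocks_apply₁₁, Matrix.fromBlocks_apply₁₂, Matrix.fromBlocks_apply₂₁,
        Matrix.fromBlocks_apply₂₂, Matrix.sub_apply, Matrix.smul_apply, Matrix.one_apply,
        smul_eq_mul, mul_ite, mul_one, mul_zero, Matrix.neg_apply] <;>
      split_ifs <;> ring
  rw [key, Matrix.det_fromBlocks_zero₁₂, Matrix.det_smul, det_one, mul_one] at hdet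
  rcases mul_eq_zero.mp hdet with h | h
  · have h1 : -(1 + μ) = 0 := ((pow_eq_zero_iff' ).mp h).1
    have hμ : μ = -1 := by linear_combination -h1
    subst hμ
    refine ⟨by norm_num, fun h0 => absurd h0 (by norm_num)⟩
  · obtain ⟨hre, hsemi⟩ := hD μ h
    refine ⟨hre, fun h0 v hv2 => ?_⟩
    have hμ1 : (1 + μ) ≠ 0 := fun hc => by
      have := congrArg Complex.re hc
      simp [h0] at this
    rw [key] at hv2 ⊢
    rw [Matrix.fromBlocks_multiply, Matrix.fromBlocks_mulVec] at hv2
    have hv1 : v ∘ Sum.inl = 0 := by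
      funext i
      have e1 := congrFun hv2 (Sum.inl i)
      simp only [Sum.elim_inl, Matrix.mul_zero, Matrix.zero_mul, add_zero, zero_add,
        Matrix.smul_mul, Matrix.mul_smul, smul_smul, Matrix.one_mul,
        Matrix.smul_mulVec, Matrix.one_mulVec, Matrix.zero_mulVec,
        Pi.smul_apply, Pi.zero_apply, smul_eq_mul] at e1
      have hnz : -(1 + μ) * -(1 + μ) ≠ 0 := mul_ne_zero (neg_ne_zero.mpr hμ1) (neg_ne_zero.mpr hμ1)
      exact (mul_eq_zero.mp e1).resolve_left hnz
    have hv2' : ((Dc - μ • 1) * (Dc - μ • 1)).mulVec (v ∘ Sum.inr) = 0 := by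
      funext i
      have e2 := congrFun hv2 (Sum.inr i)
      simp only [Sum.elim_inr, Matrix.mul_zero, Matrix.zero_mul, add_zero, zero_add,
        hv1, Matrix.mulVec_zero, Pi.add_apply, Pi.zero_apply] at e2
      simpa using e2
    have hd : (Dc - μ • 1).mulVec (v ∘ Sum.inr) = 0 := hsemi h0 _ hv2'
    rw [Matrix.fromBlocks_mulVec]
    funext i
    cases i with
    | inl i => simp [hv1, Matrix.mulVec_zero]
    | inr i => simp [hv1, hd, Matrix.mulVec_zero]

/-- if the bottom-right block of UᵀAU (conformal with the orthogonal
projector BB† brought to diag(I_k, 0) form) is stable, then the pair (A,B) is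
stabilizable by static-state feedback. Here n = k + l. -/
theorem stabilizable_of_block_stable {k l m : ℕ}
    (A : Matrix (Fin k ⊕ Fin l) (Fin k ⊕ Fin l) ℝ)
    (B : Matrix (Fin k ⊕ Fin l) (Fin m) ℝ) (Bd : Matrix (Fin m) (Fin k ⊕ Fin l) ℝ)
    (U : Matrix (Fin k ⊕ Fin l) (Fin k ⊕ Fin l) ℝ)
    (hBd : IsMoorePenrose B Bd) (hrank : B.rank = k)
    (hU : Uᵀ * U = 1)
    (hproj : Uᵀ * (B * Bd) * U = Matrix.fromBlocks (1 : Matrix (Fin k) (Fin k) ℝ) 0 0 0)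
    (hA22 : ((Uᵀ * A * U).toBlocks₂₂).IsStable) :
    ∃ K : Matrix (Fin m) (Fin k ⊕ Fin l) ℝ, (A - B * K).IsStable := by
  have hUU : U * Uᵀ = 1 := mul_eq_one_comm.mp hU
  set E : Matrix (Fin k ⊕ Fin l) (Fin k ⊕ Fin l) ℝ :=
    Matrix.fromBlocks (1 : Matrix (Fin k) (Fin k) ℝ) 0 0 0 with hE
  set Dm : Matrix (Fin k ⊕ Fin l) (Fin k ⊕ Fin l) ℝ :=
    Matrix.fromBlocks (-1 : Matrix (Fin k) (Fin k) ℝ) 0 0 0 with hDm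
  set Ahat := Uᵀ * A * U with hAhat
  refine ⟨Bd * (A - U * Dm * Uᵀ), ?_⟩
  have hP : B * Bd = U * E * Uᵀ := by
    have : U * (Uᵀ * (B * Bd) * U) * Uᵀ = B * Bd := by
      simp only [← Matrix.mul_assoc]
      rw [hUU, Matrix.one_mul, Matrix.mul_assoc, hUU, Matrix.mul_one]
    rw [← this, hproj]
  set M : Matrix (Fin k ⊕ Fin l) (Fin k ⊕ Fin l) ℝ := Ahat - E * Ahat + E * Dm with hM
  have key : A - B * (Bd * (A - U * Dm * Uᵀ)) = U * M * Uᵀ := by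
    rw [hM, hAhat, ← Matrix.mul_assoc B Bd, hP]
    have h1 : ∀ X : Matrix (Fin k ⊕ Fin l) (Fin k ⊕ Fin l) ℝ, Uᵀ * (U * X) = X := fun X => by
      rw [← Matrix.mul_assoc, hU, Matrix.one_mul]
    have h2 : ∀ X : Matrix (Fin k ⊕ Fin l) (Fin k ⊕ Fin l) ℝ, U * (Uᵀ * X) = X := fun X => by
      rw [← Matrix.mul_assoc, hUU, Matrix.one_mul]
    simp only [Matrix.mul_sub, Matrix.sub_mul, Matrix.mul_add, Matrix.add_mul,
      Matrix.mul_assoc, h1, h2, hU, hUU, Matrix.mul_one]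
    abel
  have hMblock : M = Matrix.fromBlocks (-1) 0 (Ahat.toBlocks₂₁) (Ahat.toBlocks₂₂) := by
    rw [hM]
    conv_lhs => rw [← Matrix.fromBlocks_toBlocks Ahat]
    rw [hE, hDm, Matrix.fromBlocks_multiply, Matrix.fromBlocks_multiply]
    ext i j
    cases i <;> cases j <;>
      simp [Matrix.fromBlocks_apply₁₁, Matrix.fromBlocks_apply₁₂, Matrix.fromBlocks_apply₂₁,
        Matrix.fromBlocks_apply₂₂]
  rw [key, hMblock]
  exact stable_conj _ U hU hUU (stable_block _ _ hA22)
end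
end

section
/- Let A ∈ ℝⁿˣⁿ, B ∈ ℝⁿˣᵐ. Define 𝒲_R(A,B) = {W ∈ ℝⁿˣⁿ : A − BB†W stable} and 𝒦_R(A,B) = {K ∈ ℝᵐˣⁿ : A − BK stable}. Then 𝒲_R(A,B) ≠ ∅ if and only if 𝒦_R(A,B) ≠ ∅. More precisely: if W ∈ 𝒲_R(A,B), then for any Y ∈ ℝᵐˣⁿ, K = B†W + (I_m − B†B)Y ∈ 𝒦_R(A,B); and if K ∈ 𝒦_R(A,B), then for any N ∈ ℝⁿˣⁿ, W = BK + (Iₙ − BB†)N ∈ 𝒲_R(A,B). -/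
open Matrix

noncomputable section

/-- relation between 𝒲_R(A,B) and 𝒦_R(A,B). -/
theorem W_nonempty_iff_K_nonempty {n m : ℕ} (A : Matrix (Fin n) (Fin n) ℝ)
    (B : Matrix (Fin n) (Fin m) ℝ) (Bd : Matrix (Fin m) (Fin n) ℝ)
    (hBd : IsMoorePenrose B Bd) :
    ((∃ W : Matrix (Fin n) (Fin n) ℝ, (A - B * Bd * W).IsStable) ↔
      (∃ K : Matrix (Fin m) (Fin n) ℝ, (A - B * K).IsStable)) ∧
    (∀ W : Matrix (Fin n) (Fin n) ℝ, (A - B * Bd * W).IsStable →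
      ∀ Y : Matrix (Fin m) (Fin n) ℝ,
        (A - B * (Bd * W + (1 - Bd * B) * Y)).IsStable) ∧
    (∀ K : Matrix (Fin m) (Fin n) ℝ, (A - B * K).IsStable →
      ∀ N : Matrix (Fin n) (Fin n) ℝ,
        (A - B * Bd * (B * K + (1 - B * Bd) * N)).IsStable) := by
  obtain ⟨h1, h2, h3, h4⟩ := hBd
  refine ⟨⟨fun ⟨W, hW⟩ => ⟨Bd * W, by rwa [← Matrix.mul_assoc]⟩,
    fun ⟨K, hK⟩ => ⟨B * K, by
      have : B * Bd * (B * K) = B * K := by rw [← Matrix.mul_assoc, h1]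
      rwa [this]⟩⟩, ?_, ?_⟩
  · intro W hW Y
    have : B * (Bd * W + (1 - Bd * B) * Y) = B * Bd * W := by
      simp [Matrix.mul_add, Matrix.sub_mul, Matrix.mul_sub, ← Matrix.mul_assoc, h1]
    rwa [this]
  · intro K hK N
    have : B * Bd * (B * K + (1 - B * Bd) * N) = B * K := by
      simp [Matrix.mul_add, Matrix.sub_mul, Matrix.mul_sub, ← Matrix.mul_assoc, h1]
    rwa [this]
end
end
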